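/- arXiv:math/9912225 — 9 statements merged into one kernel-verified Lean document; each statement's English description precedes it below -/
import Mathlib

section
/- Let L < R be real numbers and let X be a random variable uniformly distributed on the interval (L,R). Then for every fixed real number s, the random variable f_{L,R,X}(s) = ⌊(s+R−X)/(R−L)⌋·(R−L) + X is uniformly distributed on the interval (s+L, s+R); equivalently, the pushforward of the uniform probability measure on (L,R) under the map x ↦ ⌊(s+R−x)/(R−L)⌋·(R−L) + x is the uniform probability measure on (s+L, s+R). -/
open MeasureTheory

/-- The uniform probability measure on the interval `(a, b)`:
normalized Lebesgue measure restricted to `(a, b)`. -/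
noncomputable def uniformIoo (a b : ℝ) : Measure ℝ :=
  (volume (Set.Ioo a b))⁻¹ • volume.restrict (Set.Ioo a b)

lemma map_add_restrict_Ioc (c p q : ℝ) :
    Measure.map (fun x : ℝ => x + c) (volume.restrict (Set.Ioc p q))
      = volume.restrict (Set.Ioc (p + c) (q + c)) := by
  have h := Measure.restrict_map (μ := volume) (measurable_add_const c)
    (measurableSet_Ioc (a := p + c) (b := q + c))
  rw [map_add_right_eq_self] at h
  rw [h]
  congr 1
  simp [Set.preimage_add_const_Ioc]

lemma map_add_restrict_Ioo (c p q : ℝ) :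
    Measure.map (fun x : ℝ => x + c) (volume.restrict (Set.Ioo p q))
      = volume.restrict (Set.Ioo (p + c) (q + c)) := by
  have h := Measure.restrict_map (μ := volume) (measurable_add_const c)
    (measurableSet_Ioo (a := p + c) (b := q + c))
  rw [map_add_right_eq_self] at h
  rw [h]
  congr 1
  simp [Set.preimage_add_const_Ioo]

/-- If `X` is uniform on `(L,R)`, then `f_{L,R,X}(s)` is uniform on `(s+L, s+R)`:
the pushforward of the uniform measure on `(L,R)` under
`x ↦ ⌊(s+R−x)/(R−L)⌋·(R−L) + x` is the uniform measure on `(s+L, s+R)`. -/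
theorem layeredShift_uniform (L R : ℝ) (hLR : L < R) (s : ℝ) :
    Measure.map (fun x : ℝ => ⌊(s + R - x) / (R - L)⌋ * (R - L) + x) (uniformIoo L R)
      = uniformIoo (s + L) (s + R) := by
  set f : ℝ → ℝ := fun x : ℝ => ⌊(s + R - x) / (R - L)⌋ * (R - L) + x with hf
  have hd0 : (0 : ℝ) < R - L := sub_pos.2 hLR
  set m : ℤ := ⌊s / (R - L)⌋ with hm
  have hms : (m : ℝ) * (R - L) ≤ s := by
    have h1 : (m : ℝ) ≤ s / (R - L) := Int.floor_le _
    calc (m : ℝ) * (R - L) ≤ (s / (R - L)) * (R - L) := by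
          exact mul_le_mul_of_nonneg_right h1 hd0.le
      _ = s := div_mul_cancel₀ _ hd0.ne'
  have hsm : s < ((m : ℝ) + 1) * (R - L) := by
    have h1 : s / (R - L) < (m : ℝ) + 1 := Int.lt_floor_add_one _
    calc s = (s / (R - L)) * (R - L) := (div_mul_cancel₀ _ hd0.ne').symm
      _ < ((m : ℝ) + 1) * (R - L) := mul_lt_mul_of_pos_right h1 hd0
  set a : ℝ := s + R - ((m : ℝ) + 1) * (R - L) with ha
  have haL : L ≤ a := by simp only [ha]; nlinarith
  have haR : a < R := by simp only [ha]; nlinarith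
  -- floor on the two pieces
  have hfA : ∀ x ∈ Set.Ioc L a, f x = x + ((m : ℝ) + 1) * (R - L) := by
    intro x hx
    have h1 : ⌊(s + R - x) / (R - L)⌋ = m + 1 := by
      rw [Int.floor_eq_iff]
      push_cast
      constructor
      · rw [le_div_iff₀ hd0]; nlinarith [hx.2]
      · rw [div_lt_iff₀ hd0]; nlinarith [hx.1]
    simp only [hf, h1]; push_cast; ring
  have hfB : ∀ x ∈ Set.Ioo a R, f x = x + (m : ℝ) * (R - L) := by
    intro x hx
    have h1 : ⌊(s + R - x) / (R - L)⌋ = m := by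
      rw [Int.floor_eq_iff]
      constructor
      · rw [le_div_iff₀ hd0]; nlinarith [hx.2]
      · rw [div_lt_iff₀ hd0]; push_cast; nlinarith [hx.1]
    simp only [hf, h1]; ring
  have hmeas : Measurable f := by
    apply Measurable.add _ measurable_id
    apply Measurable.mul_const
    exact measurable_from_top.comp
      (Measurable.floor ((measurable_const.sub measurable_id).div_const _))
  -- split the domain
  have hsplit : Set.Ioo L R = Set.Ioc L a ∪ Set.Ioo a R := by
    ext x
    simp only [Set.mem_Ioo, Set.mem_Ioc, Set.mem_union]
    constructor
    · rintro ⟨h1, h2⟩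
      rcases le_or_gt x a with h | h
      · exact Or.inl ⟨h1, h⟩
      · exact Or.inr ⟨h, h2⟩
    · rintro (⟨h1, h2⟩ | ⟨h1, h2⟩)
      · exact ⟨h1, lt_of_le_of_lt h2 haR⟩
      · exact ⟨lt_of_le_of_lt haL h1, h2⟩
  have hdisj : Disjoint (Set.Ioc L a) (Set.Ioo a R) := by
    apply Set.disjoint_left.2
    rintro x ⟨_, h2⟩ ⟨h3, _⟩
    exact absurd h2 (not_le.2 h3)
  -- compute map on each piece
  have h1 : Measure.map f (volume.restrict (Set.Ioc L a))
      = volume.restrict (Set.Ioc (L + ((m : ℝ) + 1) * (R - L)) (s + R)) := by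
    have he : f =ᶠ[ae (volume.restrict (Set.Ioc L a))]
        (fun x => x + ((m : ℝ) + 1) * (R - L)) :=
      (ae_restrict_mem measurableSet_Ioc).mono hfA
    rw [Measure.map_congr he, map_add_restrict_Ioc,
      show a + ((m : ℝ) + 1) * (R - L) = s + R by simp only [ha]; ring]
  have h2 : Measure.map f (volume.restrict (Set.Ioo a R))
      = volume.restrict (Set.Ioo (s + L) (L + ((m : ℝ) + 1) * (R - L))) := by
    have he : f =ᶠ[ae (volume.restrict (Set.Ioo a R))]
        (fun x => x + (m : ℝ) * (R - L)) :=
      (ae_restrict_mem measurableSet_Ioo).mono hfB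
    rw [Measure.map_congr he, map_add_restrict_Ioo,
      show a + (m : ℝ) * (R - L) = s + L by simp only [ha]; ring,
      show R + (m : ℝ) * (R - L) = L + ((m : ℝ) + 1) * (R - L) by ring]
  set b : ℝ := L + ((m : ℝ) + 1) * (R - L) with hb
  have hbl : s + L < b := by simp only [hb]; nlinarith
  have hbr : b ≤ s + R := by simp only [hb]; nlinarith
  -- main computation
  have hmain : Measure.map f (volume.restrict (Set.Ioo L R))
      = volume.restrict (Set.Ioo (s + L) (s + R)) := by
    rw [hsplit, Measure.restrict_union hdisj measurableSet_Ioo,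
      Measure.map_add _ _ hmeas, h1, h2,
      ← Measure.restrict_union _ measurableSet_Ioo]
    · apply Measure.restrict_congr_set
      rw [Filter.eventuallyEq_set]
      have hnull : volume ({b, s + R} : Set ℝ) = 0 :=
        Set.Countable.measure_zero (Set.countable_insert.2 (Set.countable_singleton _)) volume
      filter_upwards [measure_eq_zero_iff_ae_notMem.mp hnull] with x hx
      simp only [Set.mem_insert_iff, Set.mem_singleton_iff, not_or] at hx
      simp only [Set.mem_union, Set.mem_Ioc, Set.mem_Ioo]
      constructor
      · rintro (⟨hx1, hx2⟩ | ⟨hx1, hx2⟩)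
        · exact ⟨lt_trans hbl hx1, lt_of_le_of_ne hx2 hx.2⟩
        · exact ⟨hx1, lt_of_lt_of_le hx2 hbr⟩
      · rintro ⟨hx1, hx2⟩
        rcases lt_or_ge b x with h | h
        · exact Or.inl ⟨h, hx2.le⟩
        · exact Or.inr ⟨hx1, lt_of_le_of_ne h hx.1⟩
    · exact Set.disjoint_left.2 (by rintro x ⟨h1, _⟩ ⟨_, h2⟩; exact absurd h1 (not_lt.2 h2.le))
  -- conclude
  unfold uniformIoo
  rw [Measure.map_smul, hmain]
  congr 2
  rw [Real.volume_Ioo, Real.volume_Ioo]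
  congr 1
  ring
end

section
/- Define w(y) = √(−2·log y) + √(−2·log(1−y)) for y ∈ (0,1). Then for every y ∈ (0,1), w(y) ≥ 2√(log 4) = 2√(2·log 2), with equality exactly at y = 1/2. (Numerically, 2√(log 4) ≈ 2.35482.) -/
open Real


lemma aux_exp_quartic (z : ℝ) (hz : 0 ≤ z) :
    1 + z + z^2/2 + z^3/6 + z^4/24 ≤ exp z := by
  have h := Real.sum_le_exp_of_nonneg hz 5
  have hsum : ∑ i ∈ Finset.range 5, z ^ i / (i.factorial : ℝ)
      = 1 + z + z^2/2 + z^3/6 + z^4/24 := by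
    simp [Finset.sum_range_succ, Nat.factorial]
  linarith [hsum ▸ h]

lemma aux_exp_neg_cubic (z : ℝ) (hz : 0 ≤ z) :
    1 - z + z^2/2 - z^3/6 ≤ exp (-z) := by
  set f : ℝ → ℝ := fun w => exp w * (1 - w + w^2/2 - w^3/6) with hf
  have hderiv : ∀ x : ℝ, HasDerivAt f (exp x * (-(x^3/6))) x := by
    intro x
    have h1 : HasDerivAt (fun w : ℝ => exp w) (exp x) x := Real.hasDerivAt_exp x
    have h2 : HasDerivAt (fun w : ℝ => 1 - w + w^2/2 - w^3/6)
        (0 - 1 + (↑2 * x^1)/2 - (↑3 * x^2)/6) x := by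
      exact ((((hasDerivAt_const x (1:ℝ)).sub (hasDerivAt_id x)).add
        ((hasDerivAt_pow 2 x).div_const 2)).sub ((hasDerivAt_pow 3 x).div_const 6))
    have : HasDerivAt f (exp x * (1 - x + x^2/2 - x^3/6) + exp x * (0 - 1 + (↑2 * x^1)/2 - (↑3 * x^2)/6)) x := h1.mul h2
    convert this using 1
    ring
  have hmono : AntitoneOn f (Set.Ici 0) := by
    apply antitoneOn_of_deriv_nonpos (convex_Ici 0)
    · exact ((Real.continuous_exp).mul (by continuity)).continuousOn
    · intro x hx
      exact (hderiv x).differentiableAt.differentiableWithinAt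
    · intro x hx
      rw [(hderiv x).deriv]
      rw [interior_Ici] at hx
      have hx' : (0:ℝ) < x := hx
      nlinarith [Real.exp_pos x, pow_pos hx' 3]
  have h0 : f z ≤ f 0 := hmono (Set.self_mem_Ici) hz hz
  have hf0 : f 0 = 1 := by simp [hf]
  rw [hf0] at h0
  have hfz : exp z * (1 - z + z^2/2 - z^3/6) ≤ 1 := h0
  have hez : 0 < exp z := Real.exp_pos z
  rw [Real.exp_neg]
  nlinarith [mul_inv_cancel₀ hez.ne', inv_pos.mpr hez]


lemma aux_expA (x : ℝ) (hx : 0 < x) (hxc : x ≤ log 2) :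
    exp x < 1 + 2*(log 2)*x + (log 2)^2/3*x^2 := by
  have hc1 : (0.6931471803:ℝ) < log 2 := Real.log_two_gt_d9
  have hc2 : log 2 < 0.6931471808 := Real.log_two_lt_d9
  have hx1 : |x| ≤ 1 := by rw [abs_of_pos hx]; linarith
  have hb := Real.exp_bound hx1 (by norm_num : 0 < 4)
  have hsum : ∑ i ∈ Finset.range 4, x ^ i / (i.factorial : ℝ)
      = 1 + x + x^2/2 + x^3/6 := by
    simp [Finset.sum_range_succ, Nat.factorial]
  rw [hsum, abs_of_pos hx] at hb
  have hb' : exp x ≤ 1 + x + x^2/2 + x^3/6 + x^4 * (5/96) := by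
    have := (abs_le.mp hb).2
    norm_num [Nat.factorial] at this ⊢
    nlinarith [this, pow_pos hx 4]
  have h2 : x^2 ≤ (log 2)^2 := by nlinarith
  have h3 : x^3 ≤ (log 2)^3 := by nlinarith
  nlinarith [hb', h2, h3, pow_pos hx 2, pow_pos hx 3, mul_pos hx hx]



lemma key_gt_pos (t : ℝ) (h0 : 0 < t) (h1 : t ≤ sqrt (log 2)) :
    1 < exp (-(sqrt (log 2) + t)^2) + exp (-(sqrt (log 2) - t)^2) := by
  set c := log 2 with hc
  set s := sqrt c with hs
  have hcpos : 0 < c := Real.log_pos (by norm_num)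
  have hs2 : s^2 = c := Real.sq_sqrt hcpos.le
  have hspos : 0 < s := Real.sqrt_pos.mpr hcpos
  set z := 2*s*t with hz
  have hzpos : 0 < z := by positivity
  have e1 : exp (-(s+t)^2) = exp (-s^2) * exp (-t^2) * exp (-z) := by
    rw [← Real.exp_add, ← Real.exp_add]; congr 1; rw [hz]; ring
  have e2 : exp (-(s-t)^2) = exp (-s^2) * exp (-t^2) * exp z := by
    rw [← Real.exp_add, ← Real.exp_add]; congr 1; rw [hz]; ring
  have hes : exp (-s^2) = 1/2 := by
    rw [hs2, hc, Real.exp_neg, Real.exp_log (by norm_num : (0:ℝ) < 2)]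
    norm_num
  have hcosh : 2 + z^2 + z^4/24 ≤ exp z + exp (-z) := by
    have := aux_exp_quartic z hzpos.le
    have := aux_exp_neg_cubic z hzpos.le
    linarith
  have hzsq : z^2 = 4*c*t^2 := by rw [hz]; nlinarith [hs2]
  have hz4 : z^4 = 16*c^2*t^4 := by
    rw [hz, show (2*s*t)^4 = 16*(s^2)^2*t^4 by ring, hs2]
  have ht2 : 0 < t^2 := by positivity
  have ht2c : t^2 ≤ c := by nlinarith [hs2]
  have hA : exp (t^2) < 1 + 2*c*t^2 + c^2/3*(t^2)^2 := aux_expA (t^2) ht2 ht2c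
  have hsum : exp (-(s+t)^2) + exp (-(s-t)^2)
      = 1/2 * exp (-t^2) * (exp z + exp (-z)) := by
    rw [e1, e2, hes]; ring
  rw [hsum]
  have hlow : 2 * exp (t^2) < exp z + exp (-z) := by
    calc 2 * exp (t^2) < 2 * (1 + 2*c*t^2 + c^2/3*(t^2)^2) := by linarith
    _ ≤ 2 + z^2 + z^4/24 := by rw [hzsq, hz4]; nlinarith [sq_nonneg t, sq_nonneg (t^2), hcpos]
    _ ≤ exp z + exp (-z) := hcosh
  have hexpt : 0 < exp (-t^2) := Real.exp_pos _
  have : 1/2 * exp (-t^2) * (2 * exp (t^2)) < 1/2 * exp (-t^2) * (exp z + exp (-z)) := by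
    apply mul_lt_mul_of_pos_left hlow (by positivity)
  have hone : 1/2 * exp (-t^2) * (2 * exp (t^2)) = 1 := by
    rw [show 1/2 * exp (-t^2) * (2 * exp (t^2)) = exp (-t^2) * exp (t^2) by ring,
      ← Real.exp_add]
    simp
  linarith [hone ▸ this]



lemma key_gt (t : ℝ) (ht : |t| ≤ sqrt (log 2)) (ht0 : t ≠ 0) :
    1 < exp (-(sqrt (log 2) + t)^2) + exp (-(sqrt (log 2) - t)^2) := by
  rcases lt_or_gt_of_ne ht0 with h | h
  · have := key_gt_pos (-t) (by linarith) (by rw [abs_of_neg h] at ht; linarith)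
    calc (1:ℝ) < exp (-(sqrt (log 2) + -t)^2) + exp (-(sqrt (log 2) - -t)^2) := this
      _ = exp (-(sqrt (log 2) + t)^2) + exp (-(sqrt (log 2) - t)^2) := by
        rw [show sqrt (log 2) + -t = sqrt (log 2) - t by ring,
            show sqrt (log 2) - -t = sqrt (log 2) + t by ring]
        ring
  · exact key_gt_pos t h (by rw [abs_of_pos h] at ht; linarith)

lemma key_ge (t : ℝ) (ht : |t| ≤ sqrt (log 2)) :
    1 ≤ exp (-(sqrt (log 2) + t)^2) + exp (-(sqrt (log 2) - t)^2) := by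
  rcases eq_or_ne t 0 with h | h
  · subst h
    have hcpos : 0 < log 2 := Real.log_pos (by norm_num)
    have hs2 : (sqrt (log 2))^2 = log 2 := Real.sq_sqrt hcpos.le
    simp only [add_zero, sub_zero]
    rw [hs2, Real.exp_neg, Real.exp_log (by norm_num : (0:ℝ) < 2)]
    norm_num
  · exact (key_gt t ht h).le

/-- The width `w(y) = √(−2·log y) + √(−2·log(1−y))` of the rectangle at vertical
coordinate `y` in the layered multishift coupler for the standard normal
distribution satisfies `w(y) ≥ 2√(log 4)` on `(0,1)`, with equality exactly
at `y = 1/2`. -/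
theorem width_ge_two_sqrt_log_four :
    ∀ y ∈ Set.Ioo (0 : ℝ) 1,
      Real.sqrt (-2 * Real.log y) + Real.sqrt (-2 * Real.log (1 - y))
        ≥ 2 * Real.sqrt (Real.log 4) ∧
      (Real.sqrt (-2 * Real.log y) + Real.sqrt (-2 * Real.log (1 - y))
        = 2 * Real.sqrt (Real.log 4) ↔ y = 1 / 2) := by
  intro y hy
  obtain ⟨hy0, hy1⟩ := hy
  have hy1' : 0 < 1 - y := by linarith
  set c := Real.log 2 with hcdef
  have hcpos : 0 < c := Real.log_pos (by norm_num)
  set s := Real.sqrt c with hsdef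
  have hspos : 0 < s := Real.sqrt_pos.mpr hcpos
  have hs2 : s^2 = c := Real.sq_sqrt hcpos.le
  set u := -Real.log y with hudef
  set v := -Real.log (1 - y) with hvdef
  have hupos : 0 < u := by
    have := Real.log_neg hy0 hy1; rw [hudef]; linarith
  have hvpos : 0 < v := by
    have := Real.log_neg hy1' (by linarith); rw [hvdef]; linarith
  set p := Real.sqrt u with hpdef
  set q := Real.sqrt v with hqdef
  have hppos : 0 < p := Real.sqrt_pos.mpr hupos
  have hqpos : 0 < q := Real.sqrt_pos.mpr hvpos
  have hp2 : p^2 = u := Real.sq_sqrt hupos.le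
  have hq2 : q^2 = v := Real.sq_sqrt hvpos.le
  have hyp : y = Real.exp (-p^2) := by
    rw [hp2, hudef, neg_neg, Real.exp_log hy0]
  have hyq : 1 - y = Real.exp (-q^2) := by
    rw [hq2, hvdef, neg_neg, Real.exp_log hy1']
  have hcon : Real.exp (-p^2) + Real.exp (-q^2) = 1 := by
    rw [← hyp, ← hyq]; ring
  have e1 : Real.sqrt (-2 * Real.log y) = Real.sqrt 2 * p := by
    rw [show -2 * Real.log y = 2 * u by rw [hudef]; ring,
        Real.sqrt_mul (by norm_num : (0:ℝ) ≤ 2)]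
  have e2 : Real.sqrt (-2 * Real.log (1 - y)) = Real.sqrt 2 * q := by
    rw [show -2 * Real.log (1 - y) = 2 * v by rw [hvdef]; ring,
        Real.sqrt_mul (by norm_num : (0:ℝ) ≤ 2)]
  have e3 : 2 * Real.sqrt (Real.log 4) = Real.sqrt 2 * (2 * s) := by
    have h4 : Real.log 4 = 2 * c := by
      rw [hcdef, show (4:ℝ) = 2^2 by norm_num, Real.log_pow]
      push_cast; ring
    rw [h4, Real.sqrt_mul (by norm_num : (0:ℝ) ≤ 2), hsdef]
    ring
  rw [e1, e2, e3]
  have hsq2 : 0 < Real.sqrt 2 := Real.sqrt_pos.mpr (by norm_num)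
  have hmain : 2 * s ≤ p + q := by
    by_contra h
    push_neg at h
    have hq' : q < 2*s - p := by linarith
    have hp2s : p < 2*s := by linarith
    have hq2lt : q^2 < (2*s - p)^2 := by nlinarith
    have hexp : Real.exp (-(2*s-p)^2) < Real.exp (-q^2) :=
      Real.exp_lt_exp.mpr (by linarith)
    have habs : |p - s| ≤ s := abs_le.mpr ⟨by linarith, by linarith⟩
    have hkey := key_ge (p - s) habs
    rw [show s + (p - s) = p by ring, show s - (p - s) = 2*s - p by ring] at hkey
    linarith
  constructor
  · have := mul_le_mul_of_nonneg_left hmain hsq2.le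
    nlinarith [this]
  constructor
  · intro heq
    have hpq : p + q = 2*s := by
      have h' : Real.sqrt 2 * (p + q) = Real.sqrt 2 * (2*s) := by linarith [heq]
      exact mul_left_cancel₀ hsq2.ne' h'
    have hps : p = s := by
      by_contra hne
      have ht0 : p - s ≠ 0 := sub_ne_zero.mpr hne
      have habs : |p - s| ≤ s := abs_le.mpr ⟨by linarith, by linarith⟩
      have hkey := key_gt (p - s) habs ht0
      rw [show s + (p - s) = p by ring] at hkey
      have hq' : s - (p - s) = q := by linarith
      rw [hq'] at hkey
      linarith
    rw [hyp, hps, hs2, hcdef, Real.exp_neg, Real.exp_log (by norm_num : (0:ℝ) < 2)]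
    norm_num
  · intro heq
    have hu : u = c := by
      rw [hudef, heq, hcdef, show (1:ℝ)/2 = 2⁻¹ by norm_num, Real.log_inv]
      ring
    have hv : v = c := by
      rw [hvdef, heq, hcdef, show (1:ℝ) - 1/2 = 2⁻¹ by norm_num, Real.log_inv]
      ring
    rw [hpdef, hqdef, hu, hv, ← hsdef]
    ring
end

section
/- ∫₀¹ (√(−2·log y) + √(−2·log(1−y))) dy = √(2π). Consequently, if Y has probability density proportional to w(y) = √(−2·log y) + √(−2·log(1−y)) on (0,1) (the distribution of the rectangle's vertical coordinate in the layered multishift coupler for the standard normal), then E[1/w(Y)] = 1/√(2π), so the expected image size of an interval of length ℓ under the layered multishift coupler for the normal distribution with standard deviation σ is 1 + ℓ/(√(2π)·σ). -/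
open Real MeasureTheory

/-- The width function of the layered multishift coupler for the standard
normal distribution: `w(y) = √(−2·log y) + √(−2·log(1−y))`. -/
noncomputable def normalWidth (y : ℝ) : ℝ :=
  Real.sqrt (-2 * Real.log y) + Real.sqrt (-2 * Real.log (1 - y))

section Aux

open Set

private noncomputable def nwf (y : ℝ) : ℝ := Real.sqrt (-2 * Real.log y)

private lemma nwf_meas : Measurable nwf :=
  (Real.measurable_log.const_mul (-2)).sqrt

private lemma nwf_nonneg : ∀ y, 0 ≤ nwf y := fun _ => Real.sqrt_nonneg _

private lemma nwf_lintegral :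
    ∫⁻ y in Ioo (0 : ℝ) 1, ENNReal.ofReal (nwf y)
      = ENNReal.ofReal (Real.sqrt (2 * π) / 2) := by
  have hnn : (0 : ℝ → ℝ) ≤ᵐ[volume.restrict (Ioo (0:ℝ) 1)] nwf :=
    Filter.Eventually.of_forall nwf_nonneg
  rw [lintegral_eq_lintegral_meas_lt _ hnn (nwf_meas.aemeasurable)]
  have hset : ∀ t ∈ Ioi (0:ℝ),
      (volume.restrict (Ioo (0:ℝ) 1)) {y | t < nwf y}
        = ENNReal.ofReal (Real.exp (-(t ^ 2 / 2))) := by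
    intro t ht
    have htpos : (0:ℝ) < t := ht
    rw [Measure.restrict_apply (measurableSet_lt measurable_const nwf_meas)]
    have hseteq : {y | t < nwf y} ∩ Ioo (0:ℝ) 1 = Ioo 0 (Real.exp (-(t ^ 2 / 2))) := by
      ext y
      simp only [mem_inter_iff, mem_setOf_eq, mem_Ioo, nwf]
      constructor
      · rintro ⟨hlt, hy0, hy1⟩
        refine ⟨hy0, ?_⟩
        have h2 : t ^ 2 < -2 * Real.log y := (Real.lt_sqrt htpos.le).mp hlt
        have : Real.log y < -(t ^ 2 / 2) := by linarith
        exact (Real.log_lt_iff_lt_exp hy0).mp this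
      · rintro ⟨hy0, hyu⟩
        have hlog : Real.log y < -(t ^ 2 / 2) := (Real.log_lt_iff_lt_exp hy0).mpr hyu
        have h1 : y < 1 := by
          calc y < Real.exp (-(t ^ 2 / 2)) := hyu
            _ < 1 := by
              apply Real.exp_lt_one_iff.mpr
              nlinarith
        refine ⟨(Real.lt_sqrt htpos.le).mpr (by linarith), hy0, h1⟩
    rw [hseteq, Real.volume_Ioo, sub_zero]
  rw [setLIntegral_congr_fun measurableSet_Ioi (fun t ht => hset t ht)]
  have hint : IntegrableOn (fun t : ℝ => Real.exp (-(t ^ 2 / 2))) (Ioi 0) volume := by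
    have := (integrable_exp_neg_mul_sq (by norm_num : (0:ℝ) < 1/2)).integrableOn
      (s := Ioi (0:ℝ))
    refine this.congr_fun (fun t _ => by ring_nf) measurableSet_Ioi
  rw [← ofReal_integral_eq_lintegral_ofReal hint
      (Filter.Eventually.of_forall fun t => (Real.exp_pos _).le)]
  congr 1
  have h := integral_gaussian_Ioi (1/2 : ℝ)
  have heq : ∀ t : ℝ, Real.exp (-(t ^ 2 / 2)) = Real.exp (-(1/2 : ℝ) * t ^ 2) := by
    intro t; ring_nf
  calc ∫ t in Ioi (0:ℝ), Real.exp (-(t ^ 2 / 2))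
      = ∫ t in Ioi (0:ℝ), Real.exp (-(1/2 : ℝ) * t ^ 2) := by
        exact setIntegral_congr_fun measurableSet_Ioi (fun t _ => heq t)
    _ = Real.sqrt (π / (1/2)) / 2 := h
    _ = Real.sqrt (2 * π) / 2 := by norm_num [mul_comm]

private lemma nwf_integrableOn : IntegrableOn nwf (Ioo (0:ℝ) 1) volume := by
  refine ⟨nwf_meas.aestronglyMeasurable, ?_⟩
  rw [hasFiniteIntegral_iff_ofReal (Filter.Eventually.of_forall nwf_nonneg)]
  rw [nwf_lintegral]
  exact ENNReal.ofReal_lt_top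

private lemma nwf_integral : ∫ y in Ioo (0:ℝ) 1, nwf y = Real.sqrt (2 * π) / 2 := by
  rw [integral_eq_lintegral_of_nonneg_ae
      (Filter.Eventually.of_forall nwf_nonneg)
      nwf_meas.aestronglyMeasurable, nwf_lintegral, ENNReal.toReal_ofReal]
  positivity

private lemma nwf_refl_integrableOn :
    IntegrableOn (fun y => nwf (1 - y)) (Ioo (0:ℝ) 1) volume := by
  have h1 : IntervalIntegrable nwf volume 0 1 := by
    rw [intervalIntegrable_iff_integrableOn_Ioc_of_le zero_le_one]
    exact nwf_integrableOn.congr_set_ae (Ioo_ae_eq_Ioc).symm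
  have h2 := h1.comp_sub_left 1
  simp only [sub_zero, sub_self] at h2
  have h3 := h2.symm
  rw [intervalIntegrable_iff_integrableOn_Ioc_of_le zero_le_one] at h3
  exact h3.congr_set_ae Ioo_ae_eq_Ioc

private lemma nwf_refl_integral :
    ∫ y in Ioo (0:ℝ) 1, nwf (1 - y) = Real.sqrt (2 * π) / 2 := by
  rw [← integral_Ioc_eq_integral_Ioo,
      ← intervalIntegral.integral_of_le (zero_le_one)]
  have h := intervalIntegral.integral_comp_sub_left nwf 1
    (a := 0) (b := 1)
  simp only [sub_zero, sub_self] at h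
  rw [h, intervalIntegral.integral_of_le zero_le_one, integral_Ioc_eq_integral_Ioo,
    nwf_integral]

private lemma normalWidth_pos {y : ℝ} (hy : y ∈ Ioo (0:ℝ) 1) : 0 < normalWidth y := by
  have hlog : Real.log y < 0 := Real.log_neg hy.1 hy.2
  have h1 : 0 < Real.sqrt (-2 * Real.log y) := Real.sqrt_pos.mpr (by linarith)
  have h2 : 0 ≤ Real.sqrt (-2 * Real.log (1 - y)) := Real.sqrt_nonneg _
  unfold normalWidth; linarith

end Aux

/-- `∫₀¹ w(y) dy = √(2π)`; consequently, if `Y` has density `w(y)/√(2π)` on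
`(0,1)` then `E[1/w(Y)] = 1/√(2π)`, and the expected image size of an interval
of length `ℓ` under the layered multishift coupler for the normal distribution
with standard deviation `σ` is `1 + ℓ/(√(2π)·σ)`. -/
theorem integral_normalWidth :
    (∫ y in Set.Ioo (0 : ℝ) 1, normalWidth y = Real.sqrt (2 * π)) ∧
    (∫ y in Set.Ioo (0 : ℝ) 1, (1 / normalWidth y) * (normalWidth y / Real.sqrt (2 * π))
        = 1 / Real.sqrt (2 * π)) ∧
    (∀ ℓ σ : ℝ, 0 ≤ ℓ → 0 < σ →
      1 + ℓ * ∫ y in Set.Ioo (0 : ℝ) 1,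
          (1 / (σ * normalWidth y)) * (normalWidth y / Real.sqrt (2 * π))
        = 1 + ℓ / (Real.sqrt (2 * π) * σ)) := by
  have hvol : (volume (Set.Ioo (0:ℝ) 1)).toReal = 1 := by
    simp [Real.volume_Ioo]
  have hpi : (0:ℝ) < Real.sqrt (2 * π) := Real.sqrt_pos.mpr (by positivity)
  refine ⟨?_, ?_, ?_⟩
  · have : (∫ y in Set.Ioo (0 : ℝ) 1, normalWidth y)
        = (∫ y in Set.Ioo (0 : ℝ) 1, nwf y) + ∫ y in Set.Ioo (0 : ℝ) 1, nwf (1 - y) := by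
      rw [← integral_add nwf_integrableOn nwf_refl_integrableOn]
      rfl
    rw [this, nwf_integral, nwf_refl_integral]; ring
  · rw [setIntegral_congr_fun measurableSet_Ioo
      (g := fun _ : ℝ => 1 / Real.sqrt (2 * π))
      (fun y hy => by
        have hw := normalWidth_pos hy
        field_simp)]
    rw [setIntegral_const, measureReal_def, hvol, one_smul]
  · intro ℓ σ hℓ hσ
    rw [setIntegral_congr_fun measurableSet_Ioo
      (g := fun _ : ℝ => 1 / (σ * Real.sqrt (2 * π)))
      (fun y hy => by
        have hw := normalWidth_pos hy
        field_simp)]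
    rw [setIntegral_const, measureReal_def, hvol, one_smul]
    rw [mul_comm σ]
    ring
end

section
/- Let σ > 0. Let X be a random variable with the normal distribution N(0, σ²) and let U be an independent random variable uniform on (0,1). Define Y = exp(−X²/(2σ²))·U if X ≥ 0 and Y = 1 − exp(−X²/(2σ²))·U if X < 0; set L = −σ√(−2·log(1−Y)) and R = σ√(−2·log Y). Then for every fixed real number s, the random variable f_{L,R,X}(s) = ⌊(s+R−X)/(R−L)⌋·(R−L) + X is distributed according to the normal distribution N(s, σ²); that is, f_{L,R,X}(s) − s is distributed N(0, σ²) for every s. -/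
open MeasureTheory ProbabilityTheory Set
open scoped NNReal ENNReal

namespace LayeredShiftAux


lemma core_lemma (s l r : ℝ) (hlr : l < r) (A : Set ℝ) (hA : MeasurableSet A) :
    volume {x ∈ Ioo l r | (⌊(s + r - x) / (r - l)⌋ : ℝ) * (r - l) + x ∈ A}
      = volume {x ∈ Ioo l r | x + s ∈ A} := by
  obtain ⟨w, hw⟩ : ∃ w' : ℝ, w' = r - l := ⟨_, rfl⟩
  rw [← hw]
  have hw0 : 0 < w := hw ▸ sub_pos.2 hlr
  set n : ℤ := ⌊s / w⌋ with hn
  have hnw : (n : ℝ) * w ≤ s := by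
    rw [hn, ← le_div_iff₀ hw0]; exact Int.floor_le _
  have hnw' : s < ((n : ℝ) + 1) * w := by
    rw [hn, ← div_lt_iff₀ hw0]; exact Int.lt_floor_add_one _
  clear_value n
  obtain ⟨x₀, hx₀⟩ : ∃ x' : ℝ, x' = s + r - ((n : ℝ) + 1) * w := ⟨_, rfl⟩
  have hlx₀ : l ≤ x₀ := by rw [hx₀]; rw [hw] at *; nlinarith
  have hx₀r : x₀ < r := by rw [hx₀]; nlinarith
  have floor_hi : ∀ x ∈ Ioo x₀ r, ⌊(s + r - x) / w⌋ = n := by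
    rintro x ⟨h1, h2⟩
    rw [hx₀] at h1
    rw [Int.floor_eq_iff]
    constructor
    · rw [le_div_iff₀ hw0]; nlinarith
    · rw [div_lt_iff₀ hw0]; push_cast; nlinarith
  have floor_lo : ∀ x ∈ Ioc l x₀, ⌊(s + r - x) / w⌋ = n + 1 := by
    rintro x ⟨h1, h2⟩
    rw [hx₀] at h2
    rw [Int.floor_eq_iff]
    constructor
    · rw [le_div_iff₀ hw0]; push_cast; nlinarith
    · rw [div_lt_iff₀ hw0]; push_cast; nlinarith
  have hsplit : Ioc l x₀ ∪ Ioo x₀ r = Ioo l r := Ioc_union_Ioo_eq_Ioo hlx₀ hx₀r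
  obtain ⟨m, hm⟩ : ∃ m' : ℝ, m' = l + ((n : ℝ) + 1) * w := ⟨_, rfl⟩
  have hx₀m : x₀ + ((n : ℝ) + 1) * w = s + r := by rw [hx₀]; ring
  have hrm : r + (n : ℝ) * w = m := by rw [hm, hw]; ring
  have hx₀m' : x₀ + (n : ℝ) * w = s + l := by rw [hx₀, hw]; ring
  have key1 : {x ∈ Ioo l r | (⌊(s + r - x) / w⌋ : ℝ) * w + x ∈ A}
      = (Ioc l x₀ ∩ (fun x => ((n : ℝ) + 1) * w + x) ⁻¹' A)
        ∪ (Ioo x₀ r ∩ (fun x => (n : ℝ) * w + x) ⁻¹' A) := by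
    ext x
    simp only [mem_union, mem_inter_iff, mem_preimage, mem_sep_iff]
    constructor
    · rintro ⟨hx, hxA⟩
      rw [← hsplit] at hx
      rcases hx with hx | hx
      · left; refine ⟨hx, ?_⟩
        rw [floor_lo x hx] at hxA; push_cast at hxA; exact hxA
      · right; refine ⟨hx, ?_⟩
        rw [floor_hi x hx] at hxA; exact hxA
    · rintro (⟨hx, hxA⟩ | ⟨hx, hxA⟩)
      · refine ⟨by rw [← hsplit]; exact Or.inl hx, ?_⟩
        rw [floor_lo x hx]; push_cast; exact hxA
      · refine ⟨by rw [← hsplit]; exact Or.inr hx, ?_⟩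
        rw [floor_hi x hx]; exact hxA
  rw [key1]
  have hdisj : Disjoint (Ioc l x₀ ∩ (fun x => ((n : ℝ) + 1) * w + x) ⁻¹' A)
      (Ioo x₀ r ∩ (fun x => (n : ℝ) * w + x) ⁻¹' A) := by
    apply Disjoint.mono inter_subset_left inter_subset_left
    rw [Set.disjoint_left]
    rintro x ⟨_, hx2⟩ ⟨hx3, _⟩; linarith
  rw [measure_union hdisj
    (measurableSet_Ioo.inter (hA.preimage (measurable_const_add _)))]
  have trans1 : volume (Ioc l x₀ ∩ (fun x => ((n : ℝ) + 1) * w + x) ⁻¹' A)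
      = volume (Ioc m (s + r) ∩ A) := by
    have h1 : Ioc l x₀ = (fun x => ((n : ℝ) + 1) * w + x) ⁻¹' Ioc m (s + r) := by
      rw [preimage_const_add_Ioc, hm, hx₀]; congr 1 <;> ring
    rw [h1, ← preimage_inter, measure_preimage_add]
  have trans2 : volume (Ioo x₀ r ∩ (fun x => (n : ℝ) * w + x) ⁻¹' A)
      = volume (Ioo (s + l) m ∩ A) := by
    have h1 : Ioo x₀ r = (fun x => (n : ℝ) * w + x) ⁻¹' Ioo (s + l) m := by
      rw [preimage_const_add_Ioo, hm, hx₀, hw]; congr 1 <;> ring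
    rw [h1, ← preimage_inter, measure_preimage_add]
  rw [trans1, trans2]
  have rhs : {x ∈ Ioo l r | x + s ∈ A} = (fun x => x + s) ⁻¹' (Ioo (l + s) (r + s) ∩ A) := by
    rw [preimage_inter, preimage_add_const_Ioo]
    ext x
    simp only [mem_inter_iff, mem_preimage, mem_sep_iff, mem_Ioo]
    constructor
    · rintro ⟨⟨h1, h2⟩, h3⟩; exact ⟨⟨by linarith, by linarith⟩, h3⟩
    · rintro ⟨⟨h1, h2⟩, h3⟩; exact ⟨⟨by linarith, by linarith⟩, h3⟩
  rw [rhs, measure_preimage_add_right]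
  have hmle : s + l ≤ m := by rw [hm]; nlinarith
  have hmle' : m ≤ s + r := by rw [hm]; rw [hw] at *; nlinarith
  have hdisj2 : Disjoint (Ioo (s + l) m ∩ A) (Ioc m (s + r) ∩ A) := by
    apply Disjoint.mono inter_subset_left inter_subset_left
    rw [Set.disjoint_left]
    rintro x ⟨_, hx2⟩ ⟨hx3, _⟩; linarith
  rw [add_comm, ← measure_union hdisj2 (measurableSet_Ioc.inter hA),
    ← union_inter_distrib_right]
  refine measure_congr (Filter.EventuallyEq.inter ?_ (Filter.EventuallyEq.refl _ _))
  rw [MeasureTheory.ae_eq_set]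
  constructor
  · refine measure_mono_null ?_ (measure_singleton (s + r))
    rintro x ⟨hx1, hx2⟩
    simp only [mem_union, mem_Ioo, mem_Ioc, mem_singleton_iff] at *
    by_contra hne
    rcases hx1 with ⟨h1, h2⟩ | ⟨h1, h2⟩
    · exact hx2 ⟨by linarith, by linarith⟩
    · exact hx2 ⟨by linarith, by linarith [lt_of_le_of_ne h2 hne]⟩
  · refine measure_mono_null ?_ (measure_singleton m)
    rintro x ⟨⟨hx1, hx2⟩, hx3⟩
    simp only [mem_union, mem_Ioo, mem_Ioc, mem_singleton_iff] at *
    rcases lt_trichotomy x m with h | h | h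
    · exact absurd (Or.inl ⟨by linarith, h⟩) hx3
    · exact h
    · exact absurd (Or.inr ⟨h, by linarith⟩) hx3



noncomputable def yf (σ : ℝ) (p : ℝ × ℝ) : ℝ :=
  if 0 ≤ p.1 then Real.exp (-(p.1 ^ 2) / (2 * σ ^ 2)) * p.2
  else 1 - Real.exp (-(p.1 ^ 2) / (2 * σ ^ 2)) * p.2

noncomputable def gg (σ : ℝ) (p : ℝ × ℝ) : ℝ × ℝ := (p.1, yf σ p)

def DD (σ : ℝ) : Set (ℝ × ℝ) :=
  {p | (0 ≤ p.1 ∧ 0 < p.2 ∧ p.2 < Real.exp (-(p.1 ^ 2) / (2 * σ ^ 2)))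
    ∨ (p.1 < 0 ∧ 1 - Real.exp (-(p.1 ^ 2) / (2 * σ ^ 2)) < p.2 ∧ p.2 < 1)}

lemma measurable_expf (σ : ℝ) : Measurable fun x : ℝ => Real.exp (-(x ^ 2) / (2 * σ ^ 2)) := by
  fun_prop

lemma measurable_yf (σ : ℝ) : Measurable (yf σ) := by
  unfold yf
  apply Measurable.ite
  · exact measurableSet_le measurable_const (measurable_fst)
  · exact ((measurable_expf σ).comp measurable_fst).mul measurable_snd
  · exact measurable_const.sub (((measurable_expf σ).comp measurable_fst).mul measurable_snd)

lemma measurable_gg (σ : ℝ) : Measurable (gg σ) :=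
  measurable_fst.prodMk (measurable_yf σ)

lemma measurableSet_DD (σ : ℝ) : MeasurableSet (DD σ) := by
  unfold DD
  apply MeasurableSet.union
  · exact (measurableSet_le measurable_const measurable_fst).inter
      ((measurableSet_lt measurable_const measurable_snd).inter
        (measurableSet_lt measurable_snd ((measurable_expf σ).comp measurable_fst)))
  · exact (measurableSet_lt measurable_fst measurable_const).inter
      ((measurableSet_lt (measurable_const.sub ((measurable_expf σ).comp measurable_fst))
        measurable_snd).inter (measurableSet_lt measurable_snd measurable_const))

lemma pdf_eq (σ : ℝ) (hσ : 0 < σ) (x : ℝ) :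
    gaussianPDF 0 (Real.toNNReal (σ ^ 2)) x
      = ENNReal.ofReal (σ * Real.sqrt (2 * Real.pi))⁻¹
        * ENNReal.ofReal (Real.exp (-(x ^ 2) / (2 * σ ^ 2))) := by
  simp only [gaussianPDF, gaussianPDFReal]
  have hv : ((Real.toNNReal (σ ^ 2) : ℝ≥0) : ℝ) = σ ^ 2 :=
    Real.coe_toNNReal _ (sq_nonneg σ)
  rw [hv]
  have hs : Real.sqrt (2 * Real.pi * σ ^ 2) = σ * Real.sqrt (2 * Real.pi) := by
    rw [mul_comm (2 * Real.pi) (σ ^ 2), Real.sqrt_mul (sq_nonneg σ),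
      Real.sqrt_sq hσ.le]
  rw [hs, ← ENNReal.ofReal_mul (by positivity)]
  ring_nf

lemma slice_x (σ : ℝ) (hσ : 0 < σ) (x : ℝ) (S : Set (ℝ × ℝ)) (hS : MeasurableSet S) :
    gaussianPDF 0 (Real.toNNReal (σ ^ 2)) x
        * (volume.restrict (Ioo (0 : ℝ) 1)) (Prod.mk x ⁻¹' (gg σ ⁻¹' S))
      = ENNReal.ofReal (σ * Real.sqrt (2 * Real.pi))⁻¹
        * volume (Prod.mk x ⁻¹' (DD σ ∩ S)) := by
  set e : ℝ := Real.exp (-(x ^ 2) / (2 * σ ^ 2)) with hedef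
  have he : 0 < e := Real.exp_pos _
  have hAmeas : MeasurableSet (Prod.mk x ⁻¹' (gg σ ⁻¹' S)) :=
    ((measurable_gg σ).comp measurable_prodMk_left) hS
  rw [Measure.restrict_apply hAmeas, preimage_inter, pdf_eq σ hσ x]
  by_cases hx : 0 ≤ x
  · have hA : Prod.mk x ⁻¹' (gg σ ⁻¹' S) ∩ Ioo 0 1
        = (fun u => e * u) ⁻¹' (Prod.mk x ⁻¹' S ∩ Ioo 0 e) := by
      ext u
      simp only [mem_inter_iff, mem_preimage, mem_Ioo, gg, yf, if_pos hx, ← hedef]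
      constructor
      · rintro ⟨h1, h2, h3⟩
        exact ⟨h1, by positivity, by nlinarith⟩
      · rintro ⟨h1, h2, h3⟩
        exact ⟨h1, by nlinarith, by nlinarith⟩
    have hDDx : Prod.mk x ⁻¹' (DD σ) = Ioo 0 e := by
      ext y
      simp only [DD, mem_preimage, mem_setOf_eq, mem_Ioo, ← hedef]
      constructor
      · rintro (⟨_, h2, h3⟩ | ⟨h1, _, _⟩)
        · exact ⟨h2, h3⟩
        · exact absurd h1 (not_lt.2 hx)
      · rintro ⟨h1, h2⟩
        exact Or.inl ⟨hx, h1, h2⟩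
    rw [hA, Real.volume_preimage_mul_left he.ne', hDDx, abs_inv, abs_of_pos he,
      inter_comm (Ioo (0:ℝ) e)]
    rw [mul_assoc, ← mul_assoc (ENNReal.ofReal e), ← ENNReal.ofReal_mul he.le,
      mul_inv_cancel₀ he.ne', ENNReal.ofReal_one, one_mul]
  · push_neg at hx
    have hA : Prod.mk x ⁻¹' (gg σ ⁻¹' S) ∩ Ioo 0 1
        = (fun u => 1 - e * u) ⁻¹' (Prod.mk x ⁻¹' S ∩ Ioo (1 - e) 1) := by
      ext u
      simp only [mem_inter_iff, mem_preimage, mem_Ioo, gg, yf, if_neg (not_le.2 hx), ← hedef]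
      constructor
      · rintro ⟨h1, h2, h3⟩
        exact ⟨h1, by nlinarith, by nlinarith⟩
      · rintro ⟨h1, h2, h3⟩
        exact ⟨h1, by nlinarith, by nlinarith⟩
    have hDDx : Prod.mk x ⁻¹' (DD σ) = Ioo (1 - e) 1 := by
      ext y
      simp only [DD, mem_preimage, mem_setOf_eq, mem_Ioo, ← hedef]
      constructor
      · rintro (⟨h1, _, _⟩ | ⟨_, h2, h3⟩)
        · exact absurd hx (not_lt.2 h1)
        · exact ⟨h2, h3⟩
      · rintro ⟨h1, h2⟩
        exact Or.inr ⟨hx, h1, h2⟩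
    have hcomp : (fun u : ℝ => 1 - e * u) = (fun t : ℝ => 1 + t) ∘ (fun u : ℝ => -e * u) := by
      funext u; simp; ring
    rw [hA, hcomp, preimage_comp, Real.volume_preimage_mul_left (neg_ne_zero.2 he.ne'),
      measure_preimage_add, hDDx, abs_inv, abs_neg, abs_of_pos he,
      inter_comm (Ioo (1 - e) (1:ℝ))]
    rw [mul_assoc, ← mul_assoc (ENNReal.ofReal e), ← ENNReal.ofReal_mul he.le,
      mul_inv_cancel₀ he.ne', ENNReal.ofReal_one, one_mul]

lemma pushA (σ : ℝ) (hσ : 0 < σ) (S : Set (ℝ × ℝ)) (hS : MeasurableSet S) :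
    ((gaussianReal 0 (Real.toNNReal (σ ^ 2))).prod
        (volume.restrict (Ioo (0 : ℝ) 1))) (gg σ ⁻¹' S)
      = ENNReal.ofReal (σ * Real.sqrt (2 * Real.pi))⁻¹ * volume (DD σ ∩ S) := by
  have hv : Real.toNNReal (σ ^ 2) ≠ 0 := by
    simp only [ne_eq, Real.toNNReal_eq_zero, not_le]
    positivity
  rw [Measure.prod_apply ((measurable_gg σ) hS),
    gaussianReal_of_var_ne_zero 0 hv,
    lintegral_withDensity_eq_lintegral_mul _ (measurable_gaussianPDF _ _)
      (measurable_measure_prodMk_left ((measurable_gg σ) hS))]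
  rw [show (volume : Measure (ℝ × ℝ)) = (volume : Measure ℝ).prod volume from rfl,
    Measure.prod_apply ((measurableSet_DD σ).inter hS),
    ← lintegral_const_mul' _ _ ENNReal.ofReal_ne_top]
  exact lintegral_congr fun x => slice_x σ hσ x S hS



noncomputable def rr (σ y : ℝ) : ℝ := σ * Real.sqrt (-2 * Real.log y)
noncomputable def ll (σ y : ℝ) : ℝ := -σ * Real.sqrt (-2 * Real.log (1 - y))

noncomputable def hh (σ s : ℝ) (q : ℝ × ℝ) : ℝ :=
  ⌊(s + rr σ q.2 - q.1) / (rr σ q.2 - ll σ q.2)⌋ * (rr σ q.2 - ll σ q.2) + q.1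

lemma measurable_rr (σ : ℝ) : Measurable (rr σ) :=
  measurable_const.mul (Real.continuous_sqrt.measurable.comp
    (measurable_const.mul Real.measurable_log))

lemma measurable_ll (σ : ℝ) : Measurable (ll σ) :=
  measurable_const.mul (Real.continuous_sqrt.measurable.comp
    (measurable_const.mul (Real.measurable_log.comp (measurable_const.sub measurable_id))))

lemma measurable_hh (σ s : ℝ) : Measurable (hh σ s) := by
  have mrr : Measurable fun q : ℝ × ℝ => rr σ q.2 := (measurable_rr σ).comp measurable_snd
  have mll : Measurable fun q : ℝ × ℝ => ll σ q.2 := (measurable_ll σ).comp measurable_snd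
  have hq : Measurable fun q : ℝ × ℝ =>
      (s + rr σ q.2 - q.1) / (rr σ q.2 - ll σ q.2) :=
    ((measurable_const.add mrr).sub measurable_fst).div (mrr.sub mll)
  have hfloor : Measurable fun q : ℝ × ℝ =>
      ((⌊(s + rr σ q.2 - q.1) / (rr σ q.2 - ll σ q.2)⌋ : ℤ) : ℝ) :=
    (measurable_from_top (f := (Int.cast : ℤ → ℝ))).comp (Int.measurable_floor.comp hq)
  exact (hfloor.mul (mrr.sub mll)).add measurable_fst

lemma slice_y (σ : ℝ) (hσ : 0 < σ) (y : ℝ) (hy : y ∈ Ioo (0 : ℝ) 1) :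
    (fun x => (x, y)) ⁻¹' DD σ = Ioo (ll σ y) (rr σ y) := by
  obtain ⟨hy0, hy1⟩ := hy
  have h2σ : (0 : ℝ) < 2 * σ ^ 2 := by positivity
  have hrr : rr σ y = Real.sqrt (σ ^ 2 * (-2 * Real.log y)) := by
    rw [rr, Real.sqrt_mul (sq_nonneg σ), Real.sqrt_sq hσ.le]
  have hll : ll σ y = -Real.sqrt (σ ^ 2 * (-2 * Real.log (1 - y))) := by
    rw [ll, neg_mul, Real.sqrt_mul (sq_nonneg σ), Real.sqrt_sq hσ.le]
  ext x
  simp only [DD, mem_preimage, mem_setOf_eq, mem_Ioo]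
  have hpos1 : 0 < Real.sqrt (σ ^ 2 * (-2 * Real.log (1 - y))) := by
    apply Real.sqrt_pos.2
    have := Real.log_neg (by linarith : (0:ℝ) < 1 - y) (by linarith : (1:ℝ) - y < 1)
    nlinarith
  have hpos2 : 0 < Real.sqrt (σ ^ 2 * (-2 * Real.log y)) := by
    apply Real.sqrt_pos.2
    have := Real.log_neg hy0 hy1
    nlinarith
  constructor
  · rintro (⟨h1, _, h3⟩ | ⟨h1, h2, _⟩)
    · have hlog : Real.log y < -(x ^ 2) / (2 * σ ^ 2) :=
        (Real.log_lt_iff_lt_exp hy0).2 h3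
      have hsq : x ^ 2 < σ ^ 2 * (-2 * Real.log y) := by
        rw [lt_div_iff₀ h2σ] at hlog; nlinarith
      rw [hrr, hll]
      exact ⟨by linarith, Real.lt_sqrt_of_sq_lt hsq⟩
    · have h1y : (0 : ℝ) < 1 - y := by linarith
      have hexp : 1 - y < Real.exp (-(x ^ 2) / (2 * σ ^ 2)) := by linarith
      have hlog : Real.log (1 - y) < -(x ^ 2) / (2 * σ ^ 2) :=
        (Real.log_lt_iff_lt_exp h1y).2 hexp
      have hsq : x ^ 2 < σ ^ 2 * (-2 * Real.log (1 - y)) := by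
        rw [lt_div_iff₀ h2σ] at hlog; nlinarith
      rw [hrr, hll]
      exact ⟨Real.neg_sqrt_lt_of_sq_lt hsq, by
        have := Real.sqrt_nonneg (σ ^ 2 * (-2 * Real.log y)); linarith⟩
  · rintro ⟨hl, hr⟩
    rw [hrr] at hr
    rw [hll] at hl
    rcases le_or_gt 0 x with hx | hx
    · left
      refine ⟨hx, hy0, ?_⟩
      have hsq : x ^ 2 < σ ^ 2 * (-2 * Real.log y) := (Real.lt_sqrt hx).1 hr
      rw [← Real.exp_log hy0]
      apply Real.exp_lt_exp.2
      rw [lt_div_iff₀ h2σ]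
      nlinarith
    · right
      refine ⟨hx, ?_, hy1⟩
      have h1y : (0 : ℝ) < 1 - y := by linarith
      have hsq : x ^ 2 < σ ^ 2 * (-2 * Real.log (1 - y)) :=
        Real.sq_lt.2 ⟨hl, lt_of_lt_of_le hx (Real.sqrt_nonneg _)⟩
      have hexp : Real.log (1 - y) < -(x ^ 2) / (2 * σ ^ 2) := by
        rw [lt_div_iff₀ h2σ]; nlinarith
      have := (Real.log_lt_iff_lt_exp h1y).1 hexp
      linarith


lemma llrr (σ : ℝ) (hσ : 0 < σ) (y : ℝ) (hy : y ∈ Ioo (0 : ℝ) 1) : ll σ y < rr σ y := by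
  obtain ⟨hy0, hy1⟩ := hy
  have h1 : 0 < Real.sqrt (-2 * Real.log y) := by
    apply Real.sqrt_pos.2
    have := Real.log_neg hy0 hy1
    linarith
  have h2 : 0 ≤ Real.sqrt (-2 * Real.log (1 - y)) := Real.sqrt_nonneg _
  have : ll σ y ≤ 0 := by
    rw [ll, neg_mul]
    simp only [neg_nonpos]
    positivity
  have : 0 < rr σ y := by rw [rr]; positivity
  linarith

lemma slice_y_empty (σ : ℝ) (hσ : 0 < σ) (y : ℝ) (hy : y ∉ Ioo (0 : ℝ) 1) :
    (fun x => (x, y)) ⁻¹' DD σ = ∅ := by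
  have h2σ : (0 : ℝ) < 2 * σ ^ 2 := by positivity
  ext x
  simp only [DD, mem_preimage, mem_setOf_eq, mem_empty_iff_false, iff_false]
  rintro (⟨h1, h2, h3⟩ | ⟨h1, h2, h3⟩)
  · refine hy ⟨h2, lt_of_lt_of_le h3 ?_⟩
    rw [Real.exp_le_one_iff]
    apply div_nonpos_of_nonpos_of_nonneg (neg_nonpos.2 (sq_nonneg x)) h2σ.le
  · refine hy ⟨?_, h3⟩
    have hx2 : (0 : ℝ) < x ^ 2 := by nlinarith
    have hlt : Real.exp (-(x ^ 2) / (2 * σ ^ 2)) < 1 := by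
      rw [Real.exp_lt_one_iff]
      exact div_neg_of_neg_of_pos (by linarith) h2σ
    linarith

lemma middle (σ : ℝ) (hσ : 0 < σ) (s : ℝ) (A : Set ℝ) (hA : MeasurableSet A) :
    volume (DD σ ∩ hh σ s ⁻¹' A) = volume (DD σ ∩ (fun p : ℝ × ℝ => p.1 + s) ⁻¹' A) := by
  rw [show (volume : Measure (ℝ × ℝ)) = (volume : Measure ℝ).prod volume from rfl,
    Measure.prod_apply_symm ((measurableSet_DD σ).inter ((measurable_hh σ s) hA)),
    Measure.prod_apply_symm ((measurableSet_DD σ).inter ((measurable_fst.add_const s) hA))]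
  refine lintegral_congr fun y => ?_
  rw [preimage_inter, preimage_inter]
  by_cases hy : y ∈ Ioo (0 : ℝ) 1
  · rw [slice_y σ hσ y hy]
    have h1 : Ioo (ll σ y) (rr σ y) ∩ (fun x => (x, y)) ⁻¹' (hh σ s ⁻¹' A)
        = {x ∈ Ioo (ll σ y) (rr σ y) |
            (⌊(s + rr σ y - x) / (rr σ y - ll σ y)⌋ : ℝ) * (rr σ y - ll σ y) + x ∈ A} := by
      ext x
      simp only [mem_inter_iff, mem_preimage, mem_sep_iff, hh]
    have h2 : Ioo (ll σ y) (rr σ y) ∩ (fun x => (x, y)) ⁻¹' ((fun p : ℝ × ℝ => p.1 + s) ⁻¹' A)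
        = {x ∈ Ioo (ll σ y) (rr σ y) | x + s ∈ A} := by
      ext x
      simp only [mem_inter_iff, mem_preimage, mem_sep_iff]
    rw [h1, h2]
    exact core_lemma s (ll σ y) (rr σ y) (llrr σ hσ y hy) A hA
  · rw [slice_y_empty σ hσ y hy, empty_inter, empty_inter]

end LayeredShiftAux

open LayeredShiftAux in
/-- Given `X` normal `N(0,σ²)` and `U` uniform on `(0,1)` independent, setting
`Y = exp(−X²/(2σ²))·U` if `X ≥ 0` and `Y = 1 − exp(−X²/(2σ²))·U` otherwise,
`L = −σ√(−2·log(1−Y))`, `R = σ√(−2·log Y)`, the layered multishift value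
`f_{L,R,X}(s) = ⌊(s+R−X)/(R−L)⌋·(R−L) + X` is distributed `N(s, σ²)`. -/
theorem layeredShift_gaussian (σ : ℝ) (hσ : 0 < σ) (s : ℝ) :
    Measure.map
      (fun p : ℝ × ℝ =>
        let X := p.1
        let Y := if 0 ≤ X then Real.exp (-(X ^ 2) / (2 * σ ^ 2)) * p.2
                 else 1 - Real.exp (-(X ^ 2) / (2 * σ ^ 2)) * p.2
        let L := -σ * Real.sqrt (-2 * Real.log (1 - Y))
        let R := σ * Real.sqrt (-2 * Real.log Y)
        ⌊(s + R - X) / (R - L)⌋ * (R - L) + X)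
      ((gaussianReal 0 (Real.toNNReal (σ ^ 2))).prod
        (volume.restrict (Set.Ioo (0 : ℝ) 1)))
      = gaussianReal s (Real.toNNReal (σ ^ 2)) := by
  have hFeq : (fun p : ℝ × ℝ =>
        let X := p.1
        let Y := if 0 ≤ X then Real.exp (-(X ^ 2) / (2 * σ ^ 2)) * p.2
                 else 1 - Real.exp (-(X ^ 2) / (2 * σ ^ 2)) * p.2
        let L := -σ * Real.sqrt (-2 * Real.log (1 - Y))
        let R := σ * Real.sqrt (-2 * Real.log Y)
        (⌊(s + R - X) / (R - L)⌋ * (R - L) + X : ℝ))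
      = fun p => hh σ s (gg σ p) := rfl
  rw [hFeq]
  have hF : Measurable fun p : ℝ × ℝ => hh σ s (gg σ p) :=
    (measurable_hh σ s).comp (measurable_gg σ)
  refine Measure.ext fun A hA => ?_
  rw [Measure.map_apply hF hA]
  have hpre : (fun p => hh σ s (gg σ p)) ⁻¹' A = gg σ ⁻¹' (hh σ s ⁻¹' A) := rfl
  rw [hpre, pushA σ hσ _ ((measurable_hh σ s) hA), middle σ hσ s A hA,
    ← pushA σ hσ _ ((measurable_fst.add_const s) hA)]
  have h1 : gg σ ⁻¹' ((fun p : ℝ × ℝ => p.1 + s) ⁻¹' A)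
      = ((fun t : ℝ => t + s) ⁻¹' A) ×ˢ (univ : Set ℝ) := by
    ext p
    simp only [mem_preimage, mem_prod, mem_univ, and_true, gg]
  rw [h1, Measure.prod_prod, Measure.restrict_apply MeasurableSet.univ, univ_inter,
    Real.volume_Ioo]
  norm_num
  rw [← Measure.map_apply (measurable_add_const s) hA, gaussianReal_map_add_const s, zero_add]
end

section
/- Let σ > 0 and let A = {(x,y) ∈ ℝ² : 0 < y < 1 and −σ√(−2·log(1−y)) < x < σ√(−2·log y)} be the region obtained from the region under the unnormalized Gaussian density x ↦ exp(−x²/(2σ²)) by vertically reflecting its portion left of the y-axis about the line y = 1/2. If (X,Y) is uniformly distributed on A, then the first coordinate X is distributed according to the normal distribution N(0, σ²). -/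
open MeasureTheory ProbabilityTheory

lemma key_ineq {σ : ℝ} (hσ : 0 < σ) {x u : ℝ} (hx : 0 ≤ x) (hu : 0 < u) :
    (u < 1 ∧ x < σ * Real.sqrt (-2 * Real.log u)) ↔ u < Real.exp (-x^2/(2*σ^2)) := by
  rw [← Real.log_lt_iff_lt_exp hu]
  constructor
  · rintro ⟨h1, h2⟩
    have ht : 0 ≤ -2 * Real.log u := by
      have := Real.log_neg hu h1
      linarith
    have h3 : x ^ 2 < (σ * Real.sqrt (-2 * Real.log u)) ^ 2 := by
      apply sq_lt_sq' _ h2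
      nlinarith [Real.sqrt_nonneg (-2 * Real.log u)]
    rw [mul_pow, Real.sq_sqrt ht] at h3
    rw [show -x^2/(2*σ^2) = -(x^2/(2*σ^2)) by ring, lt_neg, div_lt_iff₀ (by positivity)]
    nlinarith
  · intro h
    have h0 : (0:ℝ) ≤ x^2/(2*σ^2) := by positivity
    have h1 : Real.log u < 0 := by
      have : -x^2/(2*σ^2) = -(x^2/(2*σ^2)) := by ring
      linarith [this ▸ h]
    rw [show -x^2/(2*σ^2) = -(x^2/(2*σ^2)) by ring, lt_neg, div_lt_iff₀ (by positivity)] at h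
    refine ⟨by rwa [← Real.log_neg_iff hu], ?_⟩
    have : x / σ < Real.sqrt (-2 * Real.log u) := by
      rw [Real.lt_sqrt (by positivity), div_pow, div_lt_iff₀ (by positivity)]
      nlinarith
    calc x = σ * (x / σ) := by field_simp
    _ < σ * Real.sqrt (-2 * Real.log u) := mul_lt_mul_of_pos_left this hσ

lemma sliceA {σ : ℝ} (hσ : 0 < σ) (x : ℝ) :
    {y : ℝ | 0 < y ∧ y < 1 ∧ -σ * Real.sqrt (-2 * Real.log (1 - y)) < x ∧
        x < σ * Real.sqrt (-2 * Real.log y)}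
    = if 0 ≤ x then Set.Ioo 0 (Real.exp (-x^2/(2*σ^2)))
      else Set.Ioo (1 - Real.exp (-x^2/(2*σ^2))) 1 := by
  ext y
  by_cases hx : 0 ≤ x
  · simp only [if_pos hx, Set.mem_Ioo, Set.mem_setOf_eq]
    constructor
    · rintro ⟨hy0, hy1, _, h2⟩
      exact ⟨hy0, (key_ineq hσ hx hy0).1 ⟨hy1, h2⟩⟩
    · rintro ⟨hy0, hy2⟩
      have h := (key_ineq hσ hx hy0).2 hy2
      obtain ⟨hy1, h2⟩ := h
      refine ⟨hy0, hy1, ?_, h2⟩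
      have h1y : 0 < 1 - y := by linarith
      have hs : 0 < Real.sqrt (-2 * Real.log (1 - y)) :=
        Real.sqrt_pos.2 (by nlinarith [Real.log_neg h1y (by linarith : 1 - y < 1)])
      nlinarith
  · push_neg at hx
    simp only [if_neg (not_le.2 hx), Set.mem_Ioo, Set.mem_setOf_eq]
    have hxx : (-x)^2 = x^2 := by ring
    constructor
    · rintro ⟨hy0, hy1, h1, _⟩
      have h1y : 0 < 1 - y := by linarith
      have h := (key_ineq hσ (by linarith : (0:ℝ) ≤ -x) h1y).1 ⟨by linarith, by linarith⟩
      rw [hxx] at h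
      exact ⟨by linarith, hy1⟩
    · rintro ⟨hylo, hy1⟩
      have hexp : Real.exp (-x^2/(2*σ^2)) < 1 := by
        rw [Real.exp_lt_one_iff, show -x^2/(2*σ^2) = -(x^2/(2*σ^2)) by ring, neg_lt_zero]
        have hx0 : x ≠ 0 := ne_of_lt hx
        positivity
      have hy0 : 0 < y := by linarith
      have h1y : 0 < 1 - y := by linarith
      have h := (key_ineq hσ (by linarith : (0:ℝ) ≤ -x) h1y).2 (by rw [hxx]; linarith)
      obtain ⟨_, h2⟩ := h
      refine ⟨hy0, hy1, by linarith, ?_⟩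
      have hs : 0 ≤ Real.sqrt (-2 * Real.log y) := Real.sqrt_nonneg _
      nlinarith

/-- Let `A = {(x,y) : 0 < y < 1, −σ√(−2·log(1−y)) < x < σ√(−2·log y)}`, the
region obtained from the region under the unnormalized Gaussian density
`x ↦ exp(−x²/(2σ²))` by vertically reflecting its portion left of the `y`-axis
about the line `y = 1/2`.  If `(X,Y)` is uniform on `A`, then `X` is
distributed `N(0, σ²)`. -/
theorem fst_uniform_on_reflected_region (σ : ℝ) (hσ : 0 < σ) :
    Measure.map Prod.fst
      ((volume {p : ℝ × ℝ | 0 < p.2 ∧ p.2 < 1 ∧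
          -σ * Real.sqrt (-2 * Real.log (1 - p.2)) < p.1 ∧
          p.1 < σ * Real.sqrt (-2 * Real.log p.2)})⁻¹ •
        volume.restrict {p : ℝ × ℝ | 0 < p.2 ∧ p.2 < 1 ∧
          -σ * Real.sqrt (-2 * Real.log (1 - p.2)) < p.1 ∧
          p.1 < σ * Real.sqrt (-2 * Real.log p.2)})
      = gaussianReal 0 (Real.toNNReal (σ ^ 2)) := by
  set A : Set (ℝ × ℝ) := {p : ℝ × ℝ | 0 < p.2 ∧ p.2 < 1 ∧
      -σ * Real.sqrt (-2 * Real.log (1 - p.2)) < p.1 ∧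
      p.1 < σ * Real.sqrt (-2 * Real.log p.2)} with hA
  have m1 : Measurable fun p : ℝ × ℝ => -σ * Real.sqrt (-2 * Real.log (1 - p.2)) :=
    measurable_const.mul (Real.continuous_sqrt.measurable.comp
      (measurable_const.mul (Real.measurable_log.comp (measurable_const.sub measurable_snd))))
  have m2 : Measurable fun p : ℝ × ℝ => σ * Real.sqrt (-2 * Real.log p.2) :=
    measurable_const.mul (Real.continuous_sqrt.measurable.comp
      (measurable_const.mul (Real.measurable_log.comp measurable_snd)))
  have hAm : MeasurableSet A := by
    rw [hA]
    apply MeasurableSet.inter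
    · exact measurableSet_lt measurable_const measurable_snd
    apply MeasurableSet.inter
    · exact measurableSet_lt measurable_snd measurable_const
    exact (measurableSet_lt m1 measurable_fst).inter (measurableSet_lt measurable_fst m2)
  have hvol : ∀ x : ℝ, volume (Prod.mk x ⁻¹' A) = ENNReal.ofReal (Real.exp (-x^2/(2*σ^2))) := by
    intro x
    have hp : Prod.mk x ⁻¹' A = {y : ℝ | 0 < y ∧ y < 1 ∧
        -σ * Real.sqrt (-2 * Real.log (1 - y)) < x ∧ x < σ * Real.sqrt (-2 * Real.log y)} := rfl
    rw [hp, sliceA hσ x]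
    split_ifs with h
    · rw [Real.volume_Ioo, sub_zero]
    · rw [Real.volume_Ioo]
      congr 1
      ring
  have hvolA : ∀ s : Set ℝ, MeasurableSet s → volume (Prod.fst ⁻¹' s ∩ A)
      = ∫⁻ x in s, ENNReal.ofReal (Real.exp (-x^2/(2*σ^2))) := by
    intro s hs
    rw [Measure.volume_eq_prod, Measure.prod_apply ((hs.preimage measurable_fst).inter hAm)]
    have hcong : ∀ x : ℝ, volume (Prod.mk x ⁻¹' (Prod.fst ⁻¹' s ∩ A))
        = s.indicator (fun x => ENNReal.ofReal (Real.exp (-x^2/(2*σ^2)))) x := by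
      intro x
      by_cases hxs : x ∈ s
      · have he : Prod.mk x ⁻¹' (Prod.fst ⁻¹' s ∩ A) = Prod.mk x ⁻¹' A := by
          ext y; simp [hxs]
        rw [he, hvol, Set.indicator_of_mem hxs]
      · have he : Prod.mk x ⁻¹' (Prod.fst ⁻¹' s ∩ A) = ∅ := by
          ext y; simp [hxs]
        rw [he, Set.indicator_of_notMem hxs]
        simp
    rw [lintegral_congr hcong, lintegral_indicator hs]
  have hb : (0:ℝ) < (2*σ^2)⁻¹ := by positivity
  have hfe : (fun x : ℝ => Real.exp (-x^2/(2*σ^2))) = fun x => Real.exp (-(2*σ^2)⁻¹ * x^2) := by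
    funext x
    congr 1
    field_simp
  have htot : volume A = ENNReal.ofReal (Real.sqrt (2*Real.pi*σ^2)) := by
    have h := hvolA Set.univ MeasurableSet.univ
    rw [Set.preimage_univ, Set.univ_inter, Measure.restrict_univ] at h
    rw [h, ← ofReal_integral_eq_lintegral_ofReal]
    · congr 1
      rw [hfe, integral_gaussian]
      congr 1
      rw [division_def, inv_inv]
      ring
    · rw [hfe]; exact integrable_exp_neg_mul_sq hb
    · exact Filter.Eventually.of_forall fun x => (Real.exp_pos _).le
  have hcpos : (0:ℝ) < Real.sqrt (2*Real.pi*σ^2) := Real.sqrt_pos.2 (by positivity)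
  have hv : Real.toNNReal (σ^2) ≠ 0 := by
    simp only [ne_eq, Real.toNNReal_eq_zero, not_le]
    positivity
  refine Measure.ext fun s hs => ?_
  rw [Measure.map_apply measurable_fst hs, Measure.smul_apply,
    Measure.restrict_apply (hs.preimage measurable_fst), hvolA s hs, htot, smul_eq_mul,
    gaussianReal_apply 0 hv s]
  have hpdf : ∀ x : ℝ, gaussianPDF 0 (Real.toNNReal (σ^2)) x
      = (ENNReal.ofReal (Real.sqrt (2*Real.pi*σ^2)))⁻¹
        * ENNReal.ofReal (Real.exp (-x^2/(2*σ^2))) := by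
    intro x
    rw [gaussianPDF, gaussianPDFReal, Real.coe_toNNReal _ (sq_nonneg σ), sub_zero,
      ENNReal.ofReal_mul (by positivity), ENNReal.ofReal_inv_of_pos hcpos]
  rw [lintegral_congr hpdf,
    lintegral_const_mul' _ _ (ENNReal.inv_ne_top.2 (ENNReal.ofReal_pos.2 hcpos).ne')]
end

section
/- Let μ > 0 and let X₁ and X₂ be independent random variables, each exponentially distributed with mean μ. Then for every fixed real number s, the random variable f_{X₁,X₂}(s) = ⌊(s+X₂)/(X₁+X₂)⌋·(X₁+X₂) + X₁ satisfies that f_{X₁,X₂}(s) − s is exponentially distributed with mean μ. -/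
open MeasureTheory ProbabilityTheory

open scoped ENNReal NNReal
open Real Set

namespace LayeredShiftAux

noncomputable def g (s : ℝ) (p : ℝ × ℝ) : ℝ :=
  ⌊(s + p.2) / (p.1 + p.2)⌋ * (p.1 + p.2) + p.1 - s

lemma measurable_g (s : ℝ) : Measurable (g s) := by
  have h : Measurable fun p : ℝ × ℝ => (s + p.2) / (p.1 + p.2) :=
    (measurable_const.add measurable_snd).div (measurable_fst.add measurable_snd)
  have hcast : Measurable fun p : ℝ × ℝ => ((⌊(s + p.2) / (p.1 + p.2)⌋ : ℤ) : ℝ) :=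
    measurable_from_top.comp h.floor
  exact ((hcast.mul (measurable_fst.add measurable_snd)).add measurable_fst).sub
    measurable_const

lemma measurableSet_C (s t z : ℝ) :
    MeasurableSet {u : ℝ | t < ⌊(s + (z - u)) / z⌋ * z + u - s} := by
  apply measurableSet_lt measurable_const
  have h : Measurable fun u : ℝ => (s + (z - u)) / z :=
    (measurable_const.add (measurable_const.sub measurable_id)).div measurable_const
  exact (((measurable_from_top.comp h.floor).mul measurable_const).add
    measurable_id).sub measurable_const


lemma floor_hi {z s u : ℝ} (hz : 0 < z) (hu : 0 < u) (hua : u ≤ s - ⌊s / z⌋ * z) :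
    ⌊(s + (z - u)) / z⌋ = ⌊s / z⌋ + 1 := by
  have h1 : (⌊s / z⌋ : ℝ) ≤ s / z := Int.floor_le _
  have h2 : s / z < ⌊s / z⌋ + 1 := Int.lt_floor_add_one _
  have h1' : (⌊s / z⌋ : ℝ) * z ≤ s := by rw [← le_div_iff₀ hz]; exact h1
  have h2' : s < ((⌊s / z⌋ : ℝ) + 1) * z := by rw [← div_lt_iff₀ hz]; exact h2
  rw [Int.floor_eq_iff]
  push_cast
  constructor
  · rw [le_div_iff₀ hz]; nlinarith
  · rw [div_lt_iff₀ hz]; nlinarith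

lemma floor_lo {z s u : ℝ} (hz : 0 < z) (hau : s - ⌊s / z⌋ * z < u) (huz : u < z) :
    ⌊(s + (z - u)) / z⌋ = ⌊s / z⌋ := by
  have h1 : (⌊s / z⌋ : ℝ) * z ≤ s := by rw [← le_div_iff₀ hz]; exact Int.floor_le _
  rw [Int.floor_eq_iff]
  constructor
  · rw [le_div_iff₀ hz]; nlinarith
  · push_cast
    rw [div_lt_iff₀ hz]; nlinarith

lemma vol_cond {s t : ℝ} (ht : 0 ≤ t) (z : ℝ) :
    volume (Icc 0 z ∩ {u : ℝ | t < ⌊(s + (z - u)) / z⌋ * z + u - s})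
      = ENNReal.ofReal (z - t) := by
  rcases le_or_gt z 0 with hz | hz
  · have h0 : volume (Icc (0:ℝ) z) = 0 := by
      rw [Real.volume_Icc, ENNReal.ofReal_eq_zero]; linarith
    have : volume (Icc 0 z ∩ {u : ℝ | t < ⌊(s + (z - u)) / z⌋ * z + u - s}) = 0 :=
      measure_inter_null_of_null_left _ h0
    rw [this, eq_comm, ENNReal.ofReal_eq_zero]; linarith
  · set m : ℤ := ⌊s / z⌋ with hm
    set a : ℝ := s - m * z with hadef
    have ha0 : 0 ≤ a := by
      have : (m : ℝ) * z ≤ s := by rw [← le_div_iff₀ hz]; exact Int.floor_le _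
      simp [hadef]; linarith
    have haz : a < z := by
      have : s / z < m + 1 := Int.lt_floor_add_one _
      have : s < ((m : ℝ) + 1) * z := by rw [← div_lt_iff₀ hz]; exact this
      simp [hadef]; nlinarith
    set C : Set ℝ := {u : ℝ | t < ⌊(s + (z - u)) / z⌋ * z + u - s} with hC
    have hCm : MeasurableSet C := measurableSet_C s t z
    -- replace Icc by Ioo
    have hIoo : volume (Icc 0 z ∩ C) = volume (Ioo 0 z ∩ C) := by
      apply le_antisymm
      · have hsub : Icc 0 z ∩ C ⊆ (Ioo 0 z ∩ C) ∪ {0, z} := by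
          rintro u ⟨⟨h0u, huz⟩, hc⟩
          rcases eq_or_lt_of_le h0u with h | h
          · exact Or.inr (Or.inl h.symm)
          rcases eq_or_lt_of_le huz with h' | h'
          · exact Or.inr (Or.inr h')
          · exact Or.inl ⟨⟨h, h'⟩, hc⟩
        calc volume (Icc 0 z ∩ C) ≤ volume ((Ioo 0 z ∩ C) ∪ {0, z}) := measure_mono hsub
          _ ≤ volume (Ioo 0 z ∩ C) + volume ({0, z} : Set ℝ) := measure_union_le _ _
          _ = volume (Ioo 0 z ∩ C) := by
              have h2z : volume ({0, z} : Set ℝ) = 0 := by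
                rw [Set.insert_eq]
                exact measure_union_null Real.volume_singleton Real.volume_singleton
              rw [h2z, add_zero]
      · exact measure_mono (inter_subset_inter_left _ Ioo_subset_Icc_self)
    rw [hIoo]
    have hset : Ioo 0 z ∩ C = Ioc (max (t + a - z) 0) a ∪ Ioo (max (t + a) a) z := by
      ext u
      simp only [mem_inter_iff, mem_Ioo, mem_Ioc, mem_union, hC, mem_setOf_eq, max_lt_iff]
      constructor
      · rintro ⟨⟨h0u, huz⟩, hcond⟩
        rcases le_or_gt u a with hua | hau
        · left
          have hf := floor_hi hz h0u (by rw [← hadef]; exact hua)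
          rw [hf, ← hm] at hcond
          push_cast at hcond
          refine ⟨⟨?_, h0u⟩, hua⟩
          have : (m : ℝ) * z = s - a := by rw [hadef]; ring
          nlinarith
        · right
          have hf := floor_lo hz (by rw [← hadef]; exact hau) huz
          rw [hf, ← hm] at hcond
          have : (m : ℝ) * z = s - a := by rw [hadef]; ring
          refine ⟨⟨?_, hau⟩, huz⟩
          nlinarith
      · rintro (⟨⟨h1, h2⟩, h3⟩ | ⟨⟨h1, h2⟩, h3⟩)
        · have huz : u < z := lt_of_le_of_lt h3 haz
          have hf := floor_hi hz h2 (by rw [← hadef]; exact h3)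
          refine ⟨⟨h2, huz⟩, ?_⟩
          rw [hf, ← hm]
          push_cast
          have : (m : ℝ) * z = s - a := by rw [hadef]; ring
          nlinarith
        · have h0u : 0 < u := lt_of_le_of_lt ha0 h2
          have hf := floor_lo hz (by rw [← hadef]; exact h2) h3
          refine ⟨⟨h0u, h3⟩, ?_⟩
          rw [hf, ← hm]
          have : (m : ℝ) * z = s - a := by rw [hadef]; ring
          nlinarith
    rw [hset, measure_union ?hd measurableSet_Ioo, Real.volume_Ioc, Real.volume_Ioo]
    case hd =>
      rw [Set.disjoint_left]
      rintro u ⟨_, hua⟩ ⟨hu, _⟩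
      exact absurd (lt_of_le_of_lt (le_max_right _ _) hu) (not_lt.mpr hua)
    rcases le_total (t + a) z with hcase | hcase
    · rw [max_eq_right (by linarith : t + a - z ≤ 0), max_eq_left (by linarith : a ≤ t + a),
        ← ENNReal.ofReal_add (by linarith) (by linarith)]
      ring_nf
    · rw [max_eq_left (by linarith : 0 ≤ t + a - z), max_eq_left (by linarith : a ≤ t + a)]
      have : ENNReal.ofReal (z - (t + a)) = 0 := by
        rw [ENNReal.ofReal_eq_zero]; linarith
      rw [this, add_zero]
      ring_nf

lemma inner_eq {r s t : ℝ} (hr : 0 < r) (ht : 0 ≤ t) (z : ℝ) :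
    ∫⁻ x, exponentialPDF r x * (exponentialPDF r (z - x) *
      Set.indicator {p : ℝ × ℝ | t < g s p} (fun _ => (1 : ℝ≥0∞)) (x, z - x)) ∂volume
      = ENNReal.ofReal (r ^ 2 * rexp (-(r * z))) * ENNReal.ofReal (z - t) := by
  set C : Set ℝ := {u : ℝ | t < ⌊(s + (z - u)) / z⌋ * z + u - s} with hC
  have hmem : ∀ x : ℝ, ((x, z - x) ∈ {p : ℝ × ℝ | t < g s p}) ↔ x ∈ C := by
    intro x
    simp only [mem_setOf_eq, g]
    rw [show x + (z - x) = z from by ring]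
    exact Iff.rfl
  have hpt : ∀ x : ℝ,
      exponentialPDF r x * (exponentialPDF r (z - x) *
        Set.indicator {p : ℝ × ℝ | t < g s p} (fun _ => (1 : ℝ≥0∞)) (x, z - x))
      = (Icc 0 z ∩ C).indicator (fun _ => ENNReal.ofReal (r ^ 2 * rexp (-(r * z)))) x := by
    intro x
    by_cases h1 : 0 ≤ x
    · by_cases h2 : x ≤ z
      · by_cases h3 : x ∈ C
        · have hmemI : x ∈ Icc 0 z ∩ C := ⟨⟨h1, h2⟩, h3⟩
          rw [Set.indicator_of_mem ((hmem x).mpr h3), Set.indicator_of_mem hmemI,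
            exponentialPDF_of_nonneg h1, exponentialPDF_of_nonneg (by linarith : (0:ℝ) ≤ z - x),
            mul_one, ← ENNReal.ofReal_mul (by positivity)]
          congr 1
          have harg : (-(r * x)) + (-(r * (z - x))) = -(r * z) := by ring
          calc r * rexp (-(r * x)) * (r * rexp (-(r * (z - x))))
              = r ^ 2 * (rexp (-(r * x)) * rexp (-(r * (z - x)))) := by ring
            _ = r ^ 2 * rexp (-(r * z)) := by rw [← Real.exp_add, harg]
        · have hnotS : (x, z - x) ∉ {p : ℝ × ℝ | t < g s p} :=
            fun hmem' => h3 ((hmem x).mp hmem')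
          have hnot : x ∉ Icc 0 z ∩ C := fun hmem' => h3 hmem'.2
          rw [Set.indicator_of_notMem hnotS, Set.indicator_of_notMem hnot, mul_zero, mul_zero]
      · have hnot : x ∉ Icc 0 z ∩ C := fun hmem' => h2 hmem'.1.2
        rw [Set.indicator_of_notMem hnot, exponentialPDF_of_neg (by linarith : z - x < 0),
          zero_mul, mul_zero]
    · have hnot : x ∉ Icc 0 z ∩ C := fun hmem' => h1 hmem'.1.1
      rw [Set.indicator_of_notMem hnot, exponentialPDF_of_neg (by linarith : x < 0), zero_mul]
  rw [lintegral_congr hpt, lintegral_indicator (measurableSet_Icc.inter (measurableSet_C s t z)),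
    setLIntegral_const, vol_cond ht z]

lemma outer_eq {r t : ℝ} (hr : 0 < r) (ht : 0 ≤ t) :
    ∫⁻ z, ENNReal.ofReal (r ^ 2 * rexp (-(r * z))) * ENNReal.ofReal (z - t) ∂volume
      = ENNReal.ofReal (rexp (-(r * t))) := by
  rw [← lintegral_add_right_eq_self
    (fun z => ENNReal.ofReal (r ^ 2 * rexp (-(r * z))) * ENNReal.ofReal (z - t)) t]
  have hpt : ∀ z : ℝ,
      ENNReal.ofReal (r ^ 2 * rexp (-(r * (z + t)))) * ENNReal.ofReal (z + t - t)
        = ENNReal.ofReal (rexp (-(r * t))) * gammaPDF 2 r z := by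
    intro z
    rw [add_sub_cancel_right, gammaPDF_eq]
    by_cases hz : 0 ≤ z
    · rw [if_pos hz, Real.Gamma_two, show (2:ℝ) - 1 = 1 by norm_num, Real.rpow_one,
        ← ENNReal.ofReal_mul (by positivity), ← ENNReal.ofReal_mul (by positivity)]
      have harg : -(r * (z + t)) = -(r * z) + -(r * t) := by ring
      rw [harg, Real.exp_add]
      congr 1
      rw [show r ^ (2:ℝ) = r ^ 2 from by rw [← Real.rpow_natCast r 2]; norm_num]
      ring
    · rw [if_neg hz, ENNReal.ofReal_zero, mul_zero,
        ENNReal.ofReal_eq_zero.mpr (by linarith : z ≤ 0), mul_zero]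
  have hgm : Measurable (gammaPDF 2 r) := (measurable_gammaPDFReal 2 r).ennreal_ofReal
  rw [lintegral_congr hpt, lintegral_const_mul _ hgm,
    lintegral_gammaPDF_eq_one (by norm_num : (0:ℝ) < 2) hr, mul_one]

lemma survival {r s t : ℝ} (hr : 0 < r) (ht : 0 ≤ t) :
    ((expMeasure r).prod (expMeasure r)) {p : ℝ × ℝ | t < g s p}
      = ENNReal.ofReal (rexp (-(r * t))) := by
  haveI : IsProbabilityMeasure (expMeasure r) := isProbabilityMeasure_expMeasure hr
  have hSm : MeasurableSet {p : ℝ × ℝ | t < g s p} :=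
    measurableSet_lt measurable_const (measurable_g s)
  have hf : Measurable (exponentialPDF r) := (measurable_exponentialPDFReal r).ennreal_ofReal
  have hind : Measurable ({p : ℝ × ℝ | t < g s p}.indicator (fun _ => (1 : ℝ≥0∞))) :=
    measurable_const.indicator hSm
  have hexp_eq : expMeasure r = volume.withDensity (exponentialPDF r) := rfl
  have hK : Measurable fun q : ℝ × ℝ =>
      exponentialPDF r q.1 * (exponentialPDF r (q.2 - q.1) *
        {p : ℝ × ℝ | t < g s p}.indicator (fun _ => (1 : ℝ≥0∞)) (q.1, q.2 - q.1)) :=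
    (hf.comp measurable_fst).mul ((hf.comp (measurable_snd.sub measurable_fst)).mul
      (hind.comp (measurable_fst.prodMk (measurable_snd.sub measurable_fst))))
  have h0 : ((expMeasure r).prod (expMeasure r)) {p : ℝ × ℝ | t < g s p}
      = ∫⁻ a, {p : ℝ × ℝ | t < g s p}.indicator (fun _ => (1 : ℝ≥0∞)) a
          ∂((expMeasure r).prod (expMeasure r)) :=
    (lintegral_indicator_one hSm).symm
  rw [h0, lintegral_prod _ hind.aemeasurable]
  have h1 : ∀ x : ℝ,
      ∫⁻ y, {p : ℝ × ℝ | t < g s p}.indicator (fun _ => (1 : ℝ≥0∞)) (x, y) ∂(expMeasure r)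
      = ∫⁻ z, exponentialPDF r (z - x) *
          {p : ℝ × ℝ | t < g s p}.indicator (fun _ => (1 : ℝ≥0∞)) (x, z - x) ∂volume := by
    intro x
    have hgx : Measurable fun y : ℝ =>
        {p : ℝ × ℝ | t < g s p}.indicator (fun _ => (1 : ℝ≥0∞)) (x, y) :=
      hind.comp measurable_prodMk_left
    rw [hexp_eq, lintegral_withDensity_eq_lintegral_mul _ hf hgx]
    exact (lintegral_sub_right_eq_self (fun y => exponentialPDF r y *
      {p : ℝ × ℝ | t < g s p}.indicator (fun _ => (1 : ℝ≥0∞)) (x, y)) x).symm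
  rw [lintegral_congr h1, hexp_eq]
  have hI : Measurable fun x : ℝ => ∫⁻ z, exponentialPDF r (z - x) *
      {p : ℝ × ℝ | t < g s p}.indicator (fun _ => (1 : ℝ≥0∞)) (x, z - x) ∂volume := by
    have hm : Measurable fun q : ℝ × ℝ => exponentialPDF r (q.2 - q.1) *
        {p : ℝ × ℝ | t < g s p}.indicator (fun _ => (1 : ℝ≥0∞)) (q.1, q.2 - q.1) :=
      (hf.comp (measurable_snd.sub measurable_fst)).mul
        (hind.comp (measurable_fst.prodMk (measurable_snd.sub measurable_fst)))
    exact Measurable.lintegral_prod_right hm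
  rw [lintegral_withDensity_eq_lintegral_mul _ hf hI]
  have h2 : ∀ x : ℝ,
      (exponentialPDF r * fun x : ℝ => ∫⁻ z, exponentialPDF r (z - x) *
        {p : ℝ × ℝ | t < g s p}.indicator (fun _ => (1 : ℝ≥0∞)) (x, z - x) ∂volume) x
      = ∫⁻ z, exponentialPDF r x * (exponentialPDF r (z - x) *
          {p : ℝ × ℝ | t < g s p}.indicator (fun _ => (1 : ℝ≥0∞)) (x, z - x)) ∂volume := by
    intro x
    simp only [Pi.mul_apply]
    exact (lintegral_const_mul _ ((hf.comp (measurable_id.sub measurable_const)).mul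
      (hind.comp ((measurable_const).prodMk (measurable_id.sub measurable_const))))).symm
  rw [lintegral_congr h2, lintegral_lintegral_swap hK.aemeasurable,
    lintegral_congr (fun z => inner_eq hr ht z)]
  exact outer_eq hr ht

end LayeredShiftAux

open LayeredShiftAux

/-- If `X₁, X₂` are independent exponentials with mean `μ` (rate `1/μ`), then
for every `s`, `f_{X₁,X₂}(s) − s = ⌊(s+X₂)/(X₁+X₂)⌋·(X₁+X₂) + X₁ − s` is
exponentially distributed with mean `μ`. -/
theorem layeredShift_exponential (μ : ℝ) (hμ : 0 < μ) (s : ℝ) :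
    Measure.map
      (fun p : ℝ × ℝ =>
        ⌊(s + p.2) / (p.1 + p.2)⌋ * (p.1 + p.2) + p.1 - s)
      ((expMeasure (1 / μ)).prod (expMeasure (1 / μ)))
      = expMeasure (1 / μ) := by
  have hr : 0 < 1 / μ := by positivity
  set r : ℝ := 1 / μ with hrdef
  haveI hPM : IsProbabilityMeasure (expMeasure r) := isProbabilityMeasure_expMeasure hr
  have hmg : Measurable (g s) := measurable_g s
  have hfun : (fun p : ℝ × ℝ =>
      ⌊(s + p.2) / (p.1 + p.2)⌋ * (p.1 + p.2) + p.1 - s) = g s := rfl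
  rw [hfun]
  haveI : IsProbabilityMeasure (Measure.map (g s) ((expMeasure r).prod (expMeasure r))) :=
    Measure.isProbabilityMeasure_map hmg.aemeasurable
  refine Measure.ext_of_Iic _ _ (fun x => ?_)
  rw [Measure.map_apply hmg measurableSet_Iic]
  have hpre : g s ⁻¹' Iic x = {p : ℝ × ℝ | x < g s p}ᶜ := by
    ext p; simp [not_lt]
  have hSm : MeasurableSet {p : ℝ × ℝ | x < g s p} :=
    measurableSet_lt measurable_const hmg
  rw [hpre, measure_compl hSm (measure_ne_top _ _), measure_univ]
  have hexp_Iic : expMeasure r (Iic x)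
      = ENNReal.ofReal (if 0 ≤ x then 1 - rexp (-(r * x)) else 0) := by
    rw [show expMeasure r = volume.withDensity (exponentialPDF r) from rfl,
      withDensity_apply _ measurableSet_Iic, lintegral_exponentialPDF_eq_antiDeriv hr x]
  rcases le_or_gt 0 x with hx | hx
  · rw [survival hr hx, hexp_Iic, if_pos hx]
    have hle : rexp (-(r * x)) ≤ 1 := by
      rw [Real.exp_le_one_iff]
      have : 0 ≤ r * x := mul_nonneg hr.le hx
      linarith
    have hsum : ENNReal.ofReal (1 - rexp (-(r * x))) + ENNReal.ofReal (rexp (-(r * x)))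
        = 1 := by
      rw [← ENNReal.ofReal_add (by linarith) (Real.exp_pos _).le]
      norm_num
    rw [← hsum]
    rw [ENNReal.add_sub_cancel_right ENNReal.ofReal_ne_top]
  · rw [hexp_Iic, if_neg (not_le.mpr hx)]
    have h1 : ((expMeasure r).prod (expMeasure r)) {p : ℝ × ℝ | x < g s p} = 1 := by
      refine le_antisymm prob_le_one ?_
      have hmono : {p : ℝ × ℝ | (0:ℝ) < g s p} ⊆ {p : ℝ × ℝ | x < g s p} :=
        fun p hp => lt_trans hx hp
      calc (1 : ℝ≥0∞) = ENNReal.ofReal (rexp (-(r * 0))) := by norm_num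
        _ = ((expMeasure r).prod (expMeasure r)) {p : ℝ × ℝ | (0:ℝ) < g s p} :=
            (survival hr le_rfl).symm
        _ ≤ _ := measure_mono hmono
    rw [h1, tsub_self, ENNReal.ofReal_zero]
end

section
/- Let μ > 0 and let X₁ and X₂ be independent random variables, each exponentially distributed with mean μ. Then E[1/(X₁+X₂)] = 1/μ. Consequently the expected number of points in the image of an interval of length ℓ under the layered multishift coupler for the exponential distribution with mean μ is 1 + ℓ/μ. -/
open MeasureTheory ProbabilityTheory Real Set

lemma expPDF_simp (r x : ℝ) :
    gammaPDF 1 r x = ENNReal.ofReal (if 0 ≤ x then r * Real.exp (-(r * x)) else 0) := by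
  rw [gammaPDF_eq]
  congr 1
  split_ifs with h
  · simp [Real.Gamma_one, Real.rpow_one, sub_self, Real.rpow_zero]
  · rfl

lemma measurable_expPDF (r : ℝ) : Measurable (gammaPDF 1 r) :=
  ENNReal.measurable_ofReal.comp (measurable_gammaPDFReal 1 r)

lemma conv_inner (r : ℝ) (hr : 0 < r) (s : ℝ) :
    ∫⁻ x, gammaPDF 1 r x * gammaPDF 1 r (s - x) =
      ENNReal.ofReal s * ENNReal.ofReal (r ^ 2 * Real.exp (-(r * s))) := by
  have : ∀ x, gammaPDF 1 r x * gammaPDF 1 r (s - x) =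
      (Icc 0 s).indicator (fun _ => ENNReal.ofReal (r ^ 2 * Real.exp (-(r * s)))) x := by
    intro x
    rw [expPDF_simp, expPDF_simp]
    by_cases h1 : 0 ≤ x
    · by_cases h2 : x ≤ s
      · rw [Set.indicator_of_mem (Set.mem_Icc.mpr ⟨h1, h2⟩), if_pos h1,
          if_pos (by linarith : (0:ℝ) ≤ s - x), ← ENNReal.ofReal_mul (by positivity)]
        congr 1
        rw [show r * Real.exp (-(r*x)) * (r * Real.exp (-(r*(s-x))))
            = r^2 * (Real.exp (-(r*x)) * Real.exp (-(r*(s-x)))) by ring, ← Real.exp_add]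
        congr 2
        ring
      · rw [Set.indicator_of_notMem (fun hm => h2 (Set.mem_Icc.mp hm).2),
          if_neg (show ¬ (0:ℝ) ≤ s - x from fun hc => h2 (by linarith))]
        simp
    · rw [Set.indicator_of_notMem (fun hm => h1 (Set.mem_Icc.mp hm).1), if_neg h1]
      simp
  simp_rw [this]
  rw [lintegral_indicator measurableSet_Icc, setLIntegral_const, Real.volume_Icc, sub_zero,
    mul_comm]

lemma key (r : ℝ) (hr : 0 < r) :
    ∫⁻ p : ℝ × ℝ, ENNReal.ofReal (1 / (p.1 + p.2))
      ∂((expMeasure r).prod (expMeasure r)) = ENNReal.ofReal r := by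
  have : IsProbabilityMeasure (expMeasure r) := isProbabilityMeasure_expMeasure hr
  have mpdf := measurable_expPDF r
  have mF : Measurable fun p : ℝ × ℝ => ENNReal.ofReal (1 / (p.1 + p.2)) := by
    apply ENNReal.measurable_ofReal.comp
    simp_rw [one_div]
    exact (measurable_fst.add measurable_snd).inv
  have mG : Measurable fun p : ℝ × ℝ =>
      gammaPDF 1 r p.1 * gammaPDF 1 r p.2 * ENNReal.ofReal (1 / (p.1 + p.2)) :=
    ((mpdf.comp measurable_fst).mul (mpdf.comp measurable_snd)).mul mF
  have mH : Measurable fun p : ℝ × ℝ =>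
      gammaPDF 1 r p.1 * gammaPDF 1 r (p.2 - p.1) * ENNReal.ofReal (1 / p.2) :=
    ((mpdf.comp measurable_fst).mul (mpdf.comp (measurable_snd.sub measurable_fst))).mul
      (ENNReal.measurable_ofReal.comp (by simp_rw [one_div]; exact measurable_snd.inv))
  -- Step 1: unfold densities
  have step1 : ∫⁻ p : ℝ × ℝ, ENNReal.ofReal (1 / (p.1 + p.2))
      ∂((expMeasure r).prod (expMeasure r)) =
      ∫⁻ p : ℝ × ℝ, gammaPDF 1 r p.1 * gammaPDF 1 r p.2 * ENNReal.ofReal (1 / (p.1 + p.2))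
        ∂((volume : Measure ℝ).prod volume) := by
    rw [lintegral_prod _ mF.aemeasurable, lintegral_prod _ mG.aemeasurable]
    rw [show expMeasure r = volume.withDensity (gammaPDF 1 r) from rfl]
    rw [lintegral_withDensity_eq_lintegral_mul _ mpdf
      (mF.lintegral_prod_right' (ν := volume.withDensity (gammaPDF 1 r)))]
    congr 1; ext x
    rw [Pi.mul_apply, lintegral_withDensity_eq_lintegral_mul _ mpdf (by fun_prop),
      ← lintegral_const_mul _ (by fun_prop)]
    congr 1; ext y
    simp [mul_assoc, mul_comm, mul_left_comm]
  -- Step 2: shear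
  have step2 : ∫⁻ p : ℝ × ℝ, gammaPDF 1 r p.1 * gammaPDF 1 r p.2
        * ENNReal.ofReal (1 / (p.1 + p.2)) ∂((volume : Measure ℝ).prod volume) =
      ∫⁻ p : ℝ × ℝ, gammaPDF 1 r p.1 * gammaPDF 1 r (p.2 - p.1)
        * ENNReal.ofReal (1 / p.2) ∂((volume : Measure ℝ).prod volume) := by
    rw [← (measurePreserving_prod_add (volume : Measure ℝ) volume).lintegral_comp mH]
    congr 1; ext p
    simp [add_sub_cancel_left]
  -- Step 3: Tonelli, s outer
  have step3 : ∫⁻ p : ℝ × ℝ, gammaPDF 1 r p.1 * gammaPDF 1 r (p.2 - p.1)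
        * ENNReal.ofReal (1 / p.2) ∂((volume : Measure ℝ).prod volume) =
      ∫⁻ s : ℝ, ENNReal.ofReal s * ENNReal.ofReal (r ^ 2 * Real.exp (-(r * s)))
        * ENNReal.ofReal (1 / s) := by
    rw [lintegral_prod_symm _ mH.aemeasurable]
    refine lintegral_congr fun s => ?_
    show ∫⁻ x : ℝ, gammaPDF 1 r x * gammaPDF 1 r (s - x) * ENNReal.ofReal (1 / s) = _
    rw [lintegral_mul_const' _ _ ENNReal.ofReal_ne_top, conv_inner r hr s]
  rw [step1, step2, step3]
  -- Step 4
  have h0 : ∀ᵐ s : ℝ, s ≠ (0 : ℝ) := by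
    rw [ae_iff]
    simp only [ne_eq, not_not, setOf_eq_eq_singleton]
    exact measure_singleton 0
  have hcong : (fun s : ℝ => ENNReal.ofReal s * ENNReal.ofReal (r ^ 2 * Real.exp (-(r * s)))
      * ENNReal.ofReal (1 / s)) =ᵐ[volume] fun s => ENNReal.ofReal r * gammaPDF 1 r s := by
    filter_upwards [h0] with s hs
    rcases lt_or_gt_of_ne hs with h | h
    · rw [ENNReal.ofReal_of_nonpos h.le, zero_mul, zero_mul, gammaPDF_of_neg h, mul_zero]
    · rw [expPDF_simp, if_pos h.le, ← ENNReal.ofReal_mul h.le, ← ENNReal.ofReal_mul (by positivity),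
        ← ENNReal.ofReal_mul hr.le]
      congr 1
      field_simp
  rw [lintegral_congr_ae hcong, lintegral_const_mul _ mpdf, lintegral_gammaPDF_eq_one zero_lt_one hr,
    mul_one]

lemma exp_ae_nonneg (r : ℝ) (hr : 0 < r) :
    ∀ᵐ p : ℝ × ℝ ∂((expMeasure r).prod (expMeasure r)), 0 ≤ p.1 ∧ 0 ≤ p.2 := by
  have h1 : (expMeasure r) (Iio 0) = 0 := by
    rw [show expMeasure r = volume.withDensity (gammaPDF 1 r) from rfl,
      withDensity_apply _ measurableSet_Iio]
    exact lintegral_gammaPDF_of_nonpos le_rfl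
  haveI : IsProbabilityMeasure (expMeasure r) := isProbabilityMeasure_expMeasure hr
  have hae : ∀ᵐ x : ℝ ∂(expMeasure r), 0 ≤ x := by
    rw [ae_iff]
    convert h1 using 2
    ext x; simp
  rw [ae_iff]
  refine measure_mono_null (fun p hp => ?_) (?_ : ((expMeasure r).prod (expMeasure r))
    ((Iio 0 ×ˢ univ) ∪ (univ ×ˢ Iio 0)) = 0)
  · simp only [mem_setOf_eq, not_and_or, not_le] at hp
    rcases hp with h | h
    · exact Or.inl ⟨h, mem_univ _⟩
    · exact Or.inr ⟨mem_univ _, h⟩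
  · refine measure_union_null ?_ ?_ <;>
      rw [Measure.prod_prod] <;> simp [h1]


/-- If `X₁, X₂` are independent exponentials with mean `μ` (rate `1/μ`), then
`E[1/(X₁+X₂)] = 1/μ`; consequently the expected number of points in the image
of an interval of length `ℓ` under the layered multishift coupler for the
exponential distribution with mean `μ` is `1 + ℓ/μ`. -/
theorem expected_inv_sum_exponential (μ : ℝ) (hμ : 0 < μ) :
    (∫ p : ℝ × ℝ, 1 / (p.1 + p.2)
        ∂((expMeasure (1 / μ)).prod (expMeasure (1 / μ))) = 1 / μ) ∧
    (∀ ℓ : ℝ, 0 ≤ ℓ →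
      ∫ p : ℝ × ℝ, (1 + ℓ / (p.1 + p.2))
          ∂((expMeasure (1 / μ)).prod (expMeasure (1 / μ))) = 1 + ℓ / μ) := by
  set r := 1 / μ with hrdef
  have hr : 0 < r := by positivity
  haveI : IsProbabilityMeasure (expMeasure r) := isProbabilityMeasure_expMeasure hr
  set P := (expMeasure r).prod (expMeasure r) with hP
  have hnn : ∀ᵐ p : ℝ × ℝ ∂P, 0 ≤ 1 / (p.1 + p.2) := by
    filter_upwards [exp_ae_nonneg r hr] with p hp
    have : 0 ≤ p.1 + p.2 := by linarith [hp.1, hp.2]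
    positivity
  have hmeas : AEStronglyMeasurable (fun p : ℝ × ℝ => 1 / (p.1 + p.2)) P := by
    apply Measurable.aestronglyMeasurable
    simp_rw [one_div]
    exact (measurable_fst.add measurable_snd).inv
  have h1 : ∫ p : ℝ × ℝ, 1 / (p.1 + p.2) ∂P = r := by
    rw [integral_eq_lintegral_of_nonneg_ae hnn hmeas, key r hr, ENNReal.toReal_ofReal hr.le]
  have hint : Integrable (fun p : ℝ × ℝ => 1 / (p.1 + p.2)) P := by
    refine ⟨hmeas, ?_⟩
    rw [hasFiniteIntegral_iff_norm]
    have : ∀ᵐ p : ℝ × ℝ ∂P, ENNReal.ofReal ‖1 / (p.1 + p.2)‖ =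
        ENNReal.ofReal (1 / (p.1 + p.2)) := by
      filter_upwards [hnn] with p hp
      rw [Real.norm_of_nonneg hp]
    rw [lintegral_congr_ae this, key r hr]
    exact ENNReal.ofReal_lt_top
  refine ⟨h1, fun ℓ hℓ => ?_⟩
  have : (fun p : ℝ × ℝ => 1 + ℓ / (p.1 + p.2)) =
      fun p : ℝ × ℝ => 1 + ℓ * (1 / (p.1 + p.2)) := by
    funext p; rw [mul_one_div]
  rw [this, integral_add (integrable_const 1) (hint.const_mul ℓ), integral_const,
    integral_const_mul, h1, probReal_univ]
  simp [hrdef, mul_one_div, div_eq_mul_inv]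
end

section
/- Let α > 0. If G is a random variable with the gamma distribution with shape parameter α+1 and scale parameter 1, and T is an independent random variable exponentially distributed with rate α (i.e., mean 1/α), then the random variable G·exp(−T) has the gamma distribution with shape parameter α and scale parameter 1. -/
open MeasureTheory Real Set ProbabilityTheory Filter Topology

lemma key_integral (u : ℝ) (hu : 0 < u) :
    ∫ t in Ioi (0:ℝ), Real.exp t * Real.exp (-(u * Real.exp t)) = Real.exp (-u) / u := by
  have hderiv : ∀ x ∈ Ici (0:ℝ), HasDerivAt (fun t => -(Real.exp (-(u * Real.exp t)) / u))
      (Real.exp x * Real.exp (-(u * Real.exp x))) x := by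
    intro x _
    have h1 : HasDerivAt (fun t : ℝ => -(u * Real.exp t)) (-(u * Real.exp x)) x :=
      ((Real.hasDerivAt_exp x).const_mul u).neg
    have h2 := (h1.exp.div_const u).neg
    convert h2 using 1
    · rfl
    · rfl
    · rfl
    · field_simp
  have htend : Tendsto (fun t => -(Real.exp (-(u * Real.exp t)) / u)) atTop (𝓝 0) := by
    have : Tendsto (fun t : ℝ => -(u * Real.exp t)) atTop atBot := by
      simpa using Real.tendsto_exp_atTop.const_mul_atTop_of_neg (neg_neg_iff_pos.mpr hu)
    have := (Real.tendsto_exp_atBot.comp this).div_const u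
    simpa using this.neg
  have := integral_Ioi_of_hasDerivAt_of_nonneg' hderiv
    (fun x _ => by positivity) htend
  rw [this]
  simp [Real.exp_zero]

lemma integrable_key (u : ℝ) (hu : 0 < u) :
    IntegrableOn (fun t => Real.exp t * Real.exp (-(u * Real.exp t))) (Ioi (0:ℝ)) := by
  have hderiv : ∀ x ∈ Ici (0:ℝ), HasDerivAt (fun t => -(Real.exp (-(u * Real.exp t)) / u))
      (Real.exp x * Real.exp (-(u * Real.exp x))) x := by
    intro x _
    have h1 : HasDerivAt (fun t : ℝ => -(u * Real.exp t)) (-(u * Real.exp x)) x :=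
      ((Real.hasDerivAt_exp x).const_mul u).neg
    have h2 := (h1.exp.div_const u).neg
    convert h2 using 1
    · rfl
    · rfl
    · rfl
    · field_simp
  have htend : Tendsto (fun t => -(Real.exp (-(u * Real.exp t)) / u)) atTop (𝓝 0) := by
    have : Tendsto (fun t : ℝ => -(u * Real.exp t)) atTop atBot := by
      simpa using Real.tendsto_exp_atTop.const_mul_atTop_of_neg (neg_neg_iff_pos.mpr hu)
    have := (Real.tendsto_exp_atBot.comp this).div_const u
    simpa using this.neg
  exact integrableOn_Ioi_deriv_of_nonneg' hderiv (fun x _ => by positivity) htend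

lemma key_lintegral (u : ℝ) (hu : 0 < u) :
    ∫⁻ t in Ici (0:ℝ), ENNReal.ofReal (Real.exp t * Real.exp (-(u * Real.exp t)))
      = ENNReal.ofReal (Real.exp (-u) / u) := by
  rw [← MeasureTheory.restrict_Ioi_eq_restrict_Ici, ← key_integral u hu,
    ← ofReal_integral_eq_lintegral_ofReal (integrable_key u hu)
      (ae_of_all _ fun x => by positivity)]

lemma inner_eq (α : ℝ) (hα : 0 < α) (u : ℝ) (hu : u ≠ 0) :
    ∫⁻ t, gammaPDF 1 α t * ENNReal.ofReal (Real.exp t)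
        * gammaPDF (α+1) 1 (Real.exp t * u) = gammaPDF α 1 u := by
  rcases lt_or_gt_of_ne hu with h | h
  · have h1 : ∀ t : ℝ, gammaPDF (α+1) 1 (Real.exp t * u) = 0 := fun t =>
      gammaPDF_of_neg (mul_neg_of_pos_of_neg (Real.exp_pos t) h)
    simp [h1, gammaPDF_of_neg h]
  · have hC : (0:ℝ) ≤ α * u ^ α / Real.Gamma (α+1) := by
      have := Real.Gamma_pos_of_pos (by linarith : (0:ℝ) < α + 1)
      positivity
    have hpt : ∀ t ∈ Ici (0:ℝ), gammaPDF 1 α t * ENNReal.ofReal (Real.exp t)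
        * gammaPDF (α+1) 1 (Real.exp t * u)
        = ENNReal.ofReal (α * u ^ α / Real.Gamma (α+1))
          * ENNReal.ofReal (Real.exp t * Real.exp (-(u * Real.exp t))) := by
      intro t ht
      have hg1 : (0:ℝ) < Real.Gamma 1 := Real.Gamma_pos_of_pos one_pos
      have hA : (0:ℝ) ≤ α ^ (1:ℝ) / Real.Gamma 1 * t ^ ((1:ℝ)-1) * Real.exp (-(α * t)) :=
        mul_nonneg (mul_nonneg (div_nonneg (Real.rpow_nonneg hα.le _) hg1.le)
          (Real.rpow_nonneg ht _)) (Real.exp_pos _).le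
      rw [gammaPDF_of_nonneg ht, gammaPDF_of_nonneg (by positivity : (0:ℝ) ≤ Real.exp t * u),
        ← ENNReal.ofReal_mul hA, ← ENNReal.ofReal_mul (mul_nonneg hA (Real.exp_pos t).le),
        ← ENNReal.ofReal_mul hC]
      congr 1
      have key : Real.exp (-(α*t)) * Real.exp (t*α) = 1 := by
        have h0 : -(α*t) + t*α = 0 := by ring
        rw [← Real.exp_add, h0, Real.exp_zero]
      rw [Real.rpow_one, Real.Gamma_one, Real.one_rpow, add_sub_cancel_right,
        Real.mul_rpow (Real.exp_pos t).le h.le, ← Real.exp_mul, mul_comm u (Real.exp t)]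
      simp only [sub_self, Real.rpow_zero, div_one, one_mul, mul_one]
      linear_combination (α * Real.exp t * u ^ α * Real.exp (-(Real.exp t * u))
        / Real.Gamma (α+1)) * key
    have hIio : ∫⁻ t in Iio (0:ℝ), gammaPDF 1 α t * ENNReal.ofReal (Real.exp t)
        * gammaPDF (α+1) 1 (Real.exp t * u) = 0 := by
      rw [setLIntegral_congr_fun (g := fun _ => 0) measurableSet_Iio
        (fun t (ht : t < 0) => by rw [gammaPDF_of_neg ht, zero_mul, zero_mul]),
        lintegral_zero]
    rw [← lintegral_add_compl _ measurableSet_Ici (μ := volume), compl_Ici, hIio, add_zero,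
      setLIntegral_congr_fun measurableSet_Ici hpt,
      lintegral_const_mul' _ _ ENNReal.ofReal_ne_top, key_lintegral u h,
      ← ENNReal.ofReal_mul hC, gammaPDF_of_nonneg h.le]
    congr 1
    rw [Real.Gamma_add_one hα.ne', Real.rpow_sub_one h.ne', Real.one_rpow]
    field_simp

/-- If `G` has the gamma distribution with shape `α+1` and scale `1`, and `T`
is an independent exponential with rate `α`, then `G·exp(−T)` has the gamma
distribution with shape `α` and scale `1`. -/
theorem gamma_mul_exp_neg_exponential (α : ℝ) (hα : 0 < α) :
    Measure.map (fun p : ℝ × ℝ => p.1 * Real.exp (-p.2))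
      ((gammaMeasure (α + 1) 1).prod (expMeasure α))
      = gammaMeasure α 1 := by
  have hα1 : (0:ℝ) < α + 1 := by linarith
  have hG : IsProbabilityMeasure (gammaMeasure (α+1) 1) := isProbabilityMeasure_gammaMeasure hα1 one_pos
  have hE : IsProbabilityMeasure (expMeasure α) := isProbabilityMeasure_expMeasure hα
  have hF : Measurable fun p : ℝ × ℝ => p.1 * Real.exp (-p.2) :=
    measurable_fst.mul (measurable_snd.neg.exp)
  have hpdf1 : Measurable (gammaPDF (α+1) 1) := (measurable_gammaPDFReal _ _).ennreal_ofReal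
  have hpdf2 : Measurable (gammaPDF 1 α) := (measurable_gammaPDFReal _ _).ennreal_ofReal
  ext s hs
  rw [Measure.map_apply hF hs, Measure.prod_apply_symm (hF hs)]
  have hslice : ∀ t : ℝ, gammaMeasure (α+1) 1
      ((fun x => (x, t)) ⁻¹' ((fun p : ℝ × ℝ => p.1 * Real.exp (-p.2)) ⁻¹' s))
      = ENNReal.ofReal (Real.exp t) * ∫⁻ u in s, gammaPDF (α+1) 1 (Real.exp t * u) := by
    intro t
    have hset : ((fun x : ℝ => (x, t)) ⁻¹' ((fun p : ℝ × ℝ => p.1 * Real.exp (-p.2)) ⁻¹' s))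
        = (fun g : ℝ => g * Real.exp (-t)) ⁻¹' s := rfl
    have hmeas : MeasurableSet ((fun g : ℝ => g * Real.exp (-t)) ⁻¹' s) :=
      (measurable_mul_const _) hs
    have ha : Real.exp t ≠ 0 := (Real.exp_pos t).ne'
    have hid : ∀ u : ℝ, Real.exp t * u * Real.exp (-t) = u := fun u => by
      rw [mul_comm (Real.exp t) u, mul_assoc, ← Real.exp_add, add_neg_cancel,
        Real.exp_zero, mul_one]
    have hset2 : (fun u : ℝ => Real.exp t * u) ⁻¹' ((fun g : ℝ => g * Real.exp (-t)) ⁻¹' s)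
        = s := by
      ext u; simp [Set.mem_preimage, hid u]
    rw [hset, gammaMeasure, withDensity_apply _ hmeas]
    conv_lhs => rw [← Real.smul_map_volume_mul_left ha]
    rw [Measure.restrict_smul, lintegral_smul_measure,
      abs_of_pos (Real.exp_pos t), Measure.restrict_map (measurable_const_mul _) hmeas,
      lintegral_map hpdf1 (measurable_const_mul _), hset2, smul_eq_mul]
  rw [lintegral_congr fun t => hslice t]
  rw [show expMeasure α = volume.withDensity (gammaPDF 1 α) from rfl]
  have hinnermeas : Measurable fun t : ℝ =>
      ∫⁻ u in s, gammaPDF (α+1) 1 (Real.exp t * u) := by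
    apply Measurable.lintegral_prod_right (f := fun t u => gammaPDF (α+1) 1 (Real.exp t * u))
    exact hpdf1.comp ((Real.measurable_exp.comp measurable_fst).mul measurable_snd)
  rw [lintegral_withDensity_eq_lintegral_mul _ hpdf2
    (g := fun t => ENNReal.ofReal (Real.exp t) * ∫⁻ u in s, gammaPDF (α+1) 1 (Real.exp t * u))
    (Real.measurable_exp.ennreal_ofReal.mul hinnermeas)]
  have hswap : ∫⁻ t, (gammaPDF 1 α * fun t => ENNReal.ofReal (Real.exp t)
        * ∫⁻ u in s, gammaPDF (α+1) 1 (Real.exp t * u)) t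
      = ∫⁻ u in s, ∫⁻ t, gammaPDF 1 α t * ENNReal.ofReal (Real.exp t)
        * gammaPDF (α+1) 1 (Real.exp t * u) := by
    have : ∀ t : ℝ, (gammaPDF 1 α * fun t => ENNReal.ofReal (Real.exp t)
          * ∫⁻ u in s, gammaPDF (α+1) 1 (Real.exp t * u)) t
        = ∫⁻ u in s, gammaPDF 1 α t * ENNReal.ofReal (Real.exp t)
          * gammaPDF (α+1) 1 (Real.exp t * u) := by
      intro t
      simp only [Pi.mul_apply]
      rw [← mul_assoc, ← lintegral_const_mul' (gammaPDF 1 α t * ENNReal.ofReal (Real.exp t)) _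
        (ENNReal.mul_ne_top (by simp [gammaPDF]) ENNReal.ofReal_ne_top)]
    rw [lintegral_congr this]
    exact lintegral_lintegral_swap
      (((hpdf2.comp measurable_fst).mul
        ((Real.measurable_exp.comp measurable_fst).ennreal_ofReal)).mul
        (hpdf1.comp ((Real.measurable_exp.comp measurable_fst).mul measurable_snd))).aemeasurable
  rw [hswap]
  have h0 : ∀ᵐ u ∂(volume.restrict s : Measure ℝ), u ≠ 0 := by
    refine ae_restrict_of_ae (ae_iff.mpr ?_)
    simp
  rw [lintegral_congr_ae (h0.mono fun u hu => inner_eq α hα u hu),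
    gammaMeasure, withDensity_apply _ hs]
end

section
/- Let α > 0. Let G be a random variable with the gamma distribution with shape parameter α and scale parameter 1, and let X be an independent random variable exponentially distributed with rate 1. Then the random variables G + X and log(1 + X/G) are independent; moreover G + X has the gamma distribution with shape parameter α+1 and scale parameter 1, and log(1 + X/G) is exponentially distributed with rate α. -/
open MeasureTheory ProbabilityTheory Real Set
open scoped ENNReal

namespace GammaExpAux

/-- 1D change of variables for lintegrals. -/
lemma lintegral_image_deriv {s : Set ℝ} {f f' : ℝ → ℝ} (hs : MeasurableSet s)
    (hf' : ∀ x ∈ s, HasDerivWithinAt f (f' x) s x) (hf : Set.InjOn f s) (g : ℝ → ℝ≥0∞) :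
    ∫⁻ x in f '' s, g x = ∫⁻ x in s, ENNReal.ofReal |f' x| * g (f x) := by
  simpa only [ContinuousLinearMap.det_toSpanSingleton] using
    MeasureTheory.lintegral_image_eq_lintegral_abs_det_fderiv_mul volume hs
      (fun x hx => (hf' x hx).hasFDerivWithinAt) hf g

/-- Product of two withDensity measures applied to a set, as an iterated integral. -/
lemma prod_density_apply (f g : ℝ → ℝ≥0∞) (hf : Measurable f)
    {C : Set (ℝ × ℝ)} (hC : MeasurableSet C) :
    ((volume.withDensity f).prod (volume.withDensity g)) C
      = ∫⁻ x, f x * ∫⁻ y, g y * C.indicator 1 (x, y) := by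
  rw [Measure.prod_apply hC]
  rw [lintegral_withDensity_eq_lintegral_mul volume hf
    (measurable_measure_prodMk_left hC)]
  refine lintegral_congr fun x => ?_
  simp only [Pi.mul_apply]
  congr 1
  rw [withDensity_apply _ (measurable_prodMk_left hC), ← lintegral_indicator
    (measurable_prodMk_left hC)]
  refine lintegral_congr fun y => ?_
  by_cases h : (x, y) ∈ C <;>
    simp [Set.indicator_apply, h, Set.mem_preimage]

lemma joint (α : ℝ) (hα : 0 < α) :
    Measure.map (fun p : ℝ × ℝ => (p.1 + p.2, Real.log (1 + p.2 / p.1)))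
        ((gammaMeasure α 1).prod (expMeasure 1))
      = (gammaMeasure (α + 1) 1).prod (expMeasure α) := by
  have hΓ : (0:ℝ) < Real.Gamma α := Real.Gamma_pos_of_pos hα
  set Φ : ℝ × ℝ → ℝ × ℝ := fun p => (p.1 + p.2, Real.log (1 + p.2 / p.1)) with hΦdef
  have hΦ : Measurable Φ :=
    (measurable_fst.add measurable_snd).prodMk
      ((measurable_const.add (measurable_snd.div measurable_fst)).log)
  ext C hC
  rw [Measure.map_apply hΦ hC]
  show ((volume.withDensity (gammaPDF α 1)).prod (volume.withDensity (gammaPDF 1 1)))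
      (Φ ⁻¹' C)
    = ((volume.withDensity (gammaPDF (α+1) 1)).prod (volume.withDensity (gammaPDF 1 α))) C
  have hm1 : Measurable (gammaPDF α 1) := (measurable_gammaPDFReal α 1).ennreal_ofReal
  have hm2 : Measurable (gammaPDF (α+1) 1) := (measurable_gammaPDFReal (α+1) 1).ennreal_ofReal
  rw [prod_density_apply _ _ hm1 (hΦ hC), prod_density_apply _ _ hm2 hC]
  -- the intermediate integrand
  set H : ℝ × ℝ → ℝ≥0∞ := fun q =>
    ({q : ℝ × ℝ | 0 < q.1 ∧ q.1 ≤ q.2}).indicator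
      (fun q => ENNReal.ofReal (q.1 ^ (α - 1) * Real.exp (-q.2) / Real.Gamma α)
        * C.indicator 1 (q.2, Real.log q.2 - Real.log q.1)) q with hHdef
  have hHmeas : Measurable H := by
    refine Measurable.indicator ?_ ?_
    · refine Measurable.mul ?_ ?_
      · exact ((measurable_fst.pow_const _ |>.mul (measurable_snd.neg.exp)).div_const
          _).ennreal_ofReal
      · exact (measurable_const.indicator hC).comp
          (measurable_snd.prodMk (measurable_snd.log.sub measurable_fst.log))
    · exact (measurableSet_lt measurable_const measurable_fst).inter
        (measurableSet_le measurable_fst measurable_snd)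
  have stepL : ∫⁻ x, gammaPDF α 1 x * ∫⁻ y, gammaPDF 1 1 y * (Φ ⁻¹' C).indicator 1 (x, y)
      = ∫⁻ x, ∫⁻ s, H (x, s) := by
    refine lintegral_congr_ae ?_
    filter_upwards [compl_mem_ae_iff.mpr (measure_singleton (0:ℝ))] with x hx
    have hx0 : x ≠ 0 := hx
    rcases hx0.lt_or_gt with hxneg | hxpos
    · rw [gammaPDF_of_neg hxneg, zero_mul]
      symm
      simp only [hHdef]
      rw [← lintegral_zero]
      exact lintegral_congr fun t =>
        Set.indicator_of_notMem (fun h => absurd h.1 hxneg.asymm) _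
    · have hinner : (∫⁻ y, gammaPDF 1 1 y * (Φ ⁻¹' C).indicator 1 (x, y))
          = ∫⁻ s in Ici x, ENNReal.ofReal (Real.exp (x - s))
              * C.indicator 1 (s, Real.log s - Real.log x) := by
      -- abbreviate
        set G : ℝ → ℝ≥0∞ := fun s => ENNReal.ofReal (Real.exp (x - s))
            * C.indicator 1 (s, Real.log s - Real.log x) with hG
        have h1 : (∫⁻ y, gammaPDF 1 1 y * (Φ ⁻¹' C).indicator 1 (x, y))
            = ∫⁻ y in Ici 0, ENNReal.ofReal |(1:ℝ)| * G (x + y) := by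
          rw [← lintegral_indicator measurableSet_Ici]
          refine lintegral_congr fun y => ?_
          by_cases hy : (0:ℝ) ≤ y
          · rw [Set.indicator_of_mem (Set.mem_Ici.mpr hy)]
            have hlog : Real.log (1 + y / x) = Real.log (x + y) - Real.log x := by
              rw [← Real.log_div (by positivity) hxpos.ne']
              congr 1
              field_simp
            have hpre : (Φ ⁻¹' C).indicator (1 : ℝ × ℝ → ℝ≥0∞) (x, y)
                = C.indicator 1 (x + y, Real.log (x + y) - Real.log x) := by
              by_cases h : (x, y) ∈ Φ ⁻¹' C
              · have h' : (x + y, Real.log (x + y) - Real.log x) ∈ C := by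
                  rw [← hlog]; exact h
                rw [Set.indicator_of_mem h, Set.indicator_of_mem h']; rfl
              · have h' : (x + y, Real.log (x + y) - Real.log x) ∉ C := by
                  rw [← hlog]; exact h
                rw [Set.indicator_of_notMem h, Set.indicator_of_notMem h']
            rw [hpre, gammaPDF_of_nonneg hy, hG]
            have hexp : (1:ℝ) ^ (1:ℝ) / Real.Gamma 1 * y ^ ((1:ℝ) - 1)
                * Real.exp (-(1 * y)) = Real.exp (x - (x + y)) := by
              rw [Real.Gamma_one, Real.one_rpow, sub_self, Real.rpow_zero]
              ring_nf
            rw [hexp]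
            simp
          · rw [Set.indicator_of_notMem (fun h => hy (Set.mem_Ici.mp h)),
              gammaPDF_of_neg (lt_of_not_ge hy), zero_mul]
        have h2 : (∫⁻ s in (fun y => x + y) '' Ici 0, G s)
            = ∫⁻ y in Ici 0, ENNReal.ofReal |(1:ℝ)| * G (x + y) :=
          lintegral_image_deriv (f' := fun _ => (1:ℝ)) measurableSet_Ici
            (fun y _ => by simpa using ((hasDerivAt_id y).const_add x).hasDerivWithinAt)
            (fun a _ b _ h => by exact add_left_cancel h) G
        rw [h1, ← h2, Set.image_const_add_Ici, add_zero]
      rw [hinner, ← lintegral_const_mul' _ _ (by rw [gammaPDF_eq]; exact ENNReal.ofReal_ne_top),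
        ← lintegral_indicator measurableSet_Ici]
      refine lintegral_congr fun s => ?_
      simp only [hHdef]
      by_cases hs : x ≤ s
      · rw [Set.indicator_of_mem (Set.mem_Ici.mpr hs),
          Set.indicator_of_mem (show (x, s) ∈ {q : ℝ × ℝ | 0 < q.1 ∧ q.1 ≤ q.2} from ⟨hxpos, hs⟩)]
        rw [gammaPDF_of_nonneg hxpos.le, ← mul_assoc, ← ENNReal.ofReal_mul (by positivity)]
        congr 2
        rw [Real.one_rpow]
        have hexp : Real.exp (-(1 * x)) * Real.exp (x - s) = Real.exp (-s) := by
          rw [← Real.exp_add]; congr 1; ring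
        rw [mul_assoc, hexp]
        ring
      · rw [Set.indicator_of_notMem (fun h => hs (Set.mem_Ici.mp h)),
          Set.indicator_of_notMem (fun h => hs h.2)]
  have stepR : ∀ s, (∫⁻ x, H (x, s))
      = gammaPDF (α+1) 1 s * ∫⁻ t, gammaPDF 1 α t * C.indicator 1 (s, t) := by
    intro s
    rcases le_or_gt s 0 with hs | hs
    · have hz : ∀ x, H (x, s) = 0 := fun x => by
        simp only [hHdef]
        exact Set.indicator_of_notMem
          (fun h => absurd (lt_of_lt_of_le h.1 h.2) hs.not_gt) _
      have hg0 : gammaPDF (α+1) 1 s = 0 := by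
        rcases lt_or_eq_of_le hs with hneg | heq
        · exact gammaPDF_of_neg hneg
        · subst heq
          rw [gammaPDF_of_nonneg le_rfl, add_sub_cancel_right, Real.zero_rpow hα.ne']
          simp
      simp [hz, hg0]
    · -- s > 0
      have hls : (∫⁻ x, H (x, s)) = ∫⁻ x in Ioc 0 s,
          ENNReal.ofReal (x ^ (α - 1) * Real.exp (-s) / Real.Gamma α)
            * C.indicator 1 (s, Real.log s - Real.log x) := by
        rw [← lintegral_indicator measurableSet_Ioc]
        refine lintegral_congr fun x => ?_
        simp only [hHdef]
        by_cases hx : x ∈ Ioc 0 s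
        · rw [Set.indicator_of_mem hx, Set.indicator_of_mem
            (show (x, s) ∈ {q : ℝ × ℝ | 0 < q.1 ∧ q.1 ≤ q.2} from ⟨hx.1, hx.2⟩)]
        · rw [Set.indicator_of_notMem hx, Set.indicator_of_notMem
            (fun h => hx ⟨h.1, h.2⟩)]
      have himg : (fun t => s * Real.exp (-t)) '' Ici 0 = Ioc 0 s := by
        ext z
        constructor
        · rintro ⟨t, ht, rfl⟩
          have ht0 : (0:ℝ) ≤ t := ht
          constructor
          · positivity
          · calc s * Real.exp (-t) ≤ s * 1 := by
                  gcongr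
                  exact Real.exp_le_one_iff.mpr (by linarith)
              _ = s := mul_one s
        · rintro ⟨hz0, hzs⟩
          refine ⟨Real.log (s / z), Real.log_nonneg ((one_le_div hz0).mpr hzs), ?_⟩
          show s * Real.exp (-Real.log (s / z)) = z
          rw [Real.exp_neg, Real.exp_log (by positivity), inv_div]
          field_simp
      have hderiv : ∀ t ∈ Ici (0:ℝ), HasDerivWithinAt (fun t => s * Real.exp (-t))
          (s * (Real.exp (-t) * -1)) (Ici 0) t := fun t _ =>
        (((Real.hasDerivAt_exp (-t)).comp t ((hasDerivAt_neg t))).const_mul s).hasDerivWithinAt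
      have hinj : Set.InjOn (fun t => s * Real.exp (-t)) (Ici 0) := by
        intro a _ b _ h
        have h2 : Real.exp (-a) = Real.exp (-b) := mul_left_cancel₀ hs.ne' h
        exact neg_injective (Real.exp_injective h2)
      rw [hls, ← himg, lintegral_image_deriv measurableSet_Ici hderiv hinj]
      -- massage the right-hand side
      have hrhs : (∫⁻ t, gammaPDF 1 α t * C.indicator 1 (s, t))
          = ∫⁻ t in Ici 0, ENNReal.ofReal (α * Real.exp (-(α * t))) * C.indicator 1 (s, t) := by
        rw [← lintegral_indicator measurableSet_Ici]
        refine lintegral_congr fun t => ?_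
        by_cases ht : (0:ℝ) ≤ t
        · rw [Set.indicator_of_mem (Set.mem_Ici.mpr ht), gammaPDF_of_nonneg ht,
            Real.Gamma_one, Real.rpow_one, sub_self, Real.rpow_zero]
          norm_num
        · rw [Set.indicator_of_notMem (fun h => ht (Set.mem_Ici.mp h)),
            gammaPDF_of_neg (lt_of_not_ge ht), zero_mul]
      rw [hrhs, ← lintegral_const_mul' _ _ (by rw [gammaPDF_eq]; exact ENNReal.ofReal_ne_top)]
      refine setLIntegral_congr_fun measurableSet_Ici (fun t _ => ?_)
      have hlog : Real.log s - Real.log (s * Real.exp (-t)) = t := by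
        rw [Real.log_mul hs.ne' (Real.exp_ne_zero _), Real.log_exp]
        ring
      rw [hlog]
      have hmerge : ∀ (A B : ℝ) (c : ℝ≥0∞), 0 ≤ A →
          ENNReal.ofReal A * (ENNReal.ofReal B * c) = ENNReal.ofReal (A * B) * c :=
        fun A B c hA => by rw [← mul_assoc, ← ENNReal.ofReal_mul hA]
      rw [gammaPDF_of_nonneg hs.le, hmerge _ _ _ (abs_nonneg _), hmerge _ _ _ (by positivity)]
      congr 2
      have habs : |s * (Real.exp (-t) * -1)| = s * Real.exp (-t) := by
        rw [abs_of_nonpos (by nlinarith [Real.exp_pos (-t)])]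
        ring
      rw [habs, Real.mul_rpow hs.le (Real.exp_nonneg _), ← Real.exp_mul,
        Real.one_rpow, add_sub_cancel_right, Real.Gamma_add_one hα.ne']
      have h3 : s ^ (α - 1) = s ^ α / s := by
        rw [Real.rpow_sub hs, Real.rpow_one]
      have h2 : Real.exp (-t) * Real.exp (-t * (α - 1)) = Real.exp (-(α * t)) := by
        rw [← Real.exp_add]; congr 1; ring
      rw [h3, ← h2, one_mul]
      field_simp
  rw [stepL, lintegral_lintegral_swap (f := fun x s => H (x, s)) hHmeas.aemeasurable]
  exact lintegral_congr stepR



end GammaExpAux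

/-- If `G` is gamma with shape `α` and scale `1` and `X` is an independent
exponential with rate `1`, then `G + X` and `log(1 + X/G)` are independent;
moreover `G + X` is gamma with shape `α+1` and scale `1`, and `log(1 + X/G)`
is exponential with rate `α`. -/
theorem gamma_add_exp_indep (α : ℝ) (hα : 0 < α) :
    IndepFun (fun p : ℝ × ℝ => p.1 + p.2)
        (fun p : ℝ × ℝ => Real.log (1 + p.2 / p.1))
        ((gammaMeasure α 1).prod (expMeasure 1)) ∧
    Measure.map (fun p : ℝ × ℝ => p.1 + p.2)
        ((gammaMeasure α 1).prod (expMeasure 1)) = gammaMeasure (α + 1) 1 ∧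
    Measure.map (fun p : ℝ × ℝ => Real.log (1 + p.2 / p.1))
        ((gammaMeasure α 1).prod (expMeasure 1)) = expMeasure α := by
  haveI h1 : IsProbabilityMeasure (gammaMeasure α 1) := isProbabilityMeasure_gammaMeasure hα one_pos
  haveI h2 : IsProbabilityMeasure (expMeasure 1) := isProbabilityMeasure_expMeasure one_pos
  haveI h3 : IsProbabilityMeasure (gammaMeasure (α + 1) 1) :=
    isProbabilityMeasure_gammaMeasure (by linarith) one_pos
  haveI h4 : IsProbabilityMeasure (expMeasure α) := isProbabilityMeasure_expMeasure hα
  set μ := (gammaMeasure α 1).prod (expMeasure 1) with hμ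
  have hsum : Measurable (fun p : ℝ × ℝ => p.1 + p.2) := measurable_fst.add measurable_snd
  have hlog : Measurable (fun p : ℝ × ℝ => Real.log (1 + p.2 / p.1)) :=
    (measurable_const.add (measurable_snd.div measurable_fst)).log
  have hΦ : Measurable (fun p : ℝ × ℝ => (p.1 + p.2, Real.log (1 + p.2 / p.1))) :=
    hsum.prodMk hlog
  have hjoint := GammaExpAux.joint α hα
  have hmap1 : Measure.map (fun p : ℝ × ℝ => p.1 + p.2) μ = gammaMeasure (α + 1) 1 := by
    have : (fun p : ℝ × ℝ => p.1 + p.2)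
        = Prod.fst ∘ (fun p : ℝ × ℝ => (p.1 + p.2, Real.log (1 + p.2 / p.1))) := rfl
    rw [this, ← Measure.map_map measurable_fst hΦ, hjoint]
    simp
  have hmap2 : Measure.map (fun p : ℝ × ℝ => Real.log (1 + p.2 / p.1)) μ = expMeasure α := by
    have : (fun p : ℝ × ℝ => Real.log (1 + p.2 / p.1))
        = Prod.snd ∘ (fun p : ℝ × ℝ => (p.1 + p.2, Real.log (1 + p.2 / p.1))) := rfl
    rw [this, ← Measure.map_map measurable_snd hΦ, hjoint]
    simp
  refine ⟨?_, hmap1, hmap2⟩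
  rw [indepFun_iff_map_prod_eq_prod_map_map hsum.aemeasurable hlog.aemeasurable]
  rw [hmap1, hmap2]
  exact hjoint
end
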